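/- arXiv:2408.12995 — 4 statements merged into one kernel-verified Lean document; each statement's English description precedes it below -/
import Mathlib

section
/- For all Boolean functions f on n bits and g on m bits, the deterministic algorithmic complexity is multiplicative under composition: a_D(f ∘ g) = a_D(f) · a_D(g). -/
open Classical

noncomputable section

/-- Flip the bits of `x` in the set `B`. -/
def flipOn {ι : Type*} [DecidableEq ι] (x : ι → Bool) (B : Finset ι) : ι → Bool :=
  fun i => if i ∈ B then !(x i) else x i

/-- Pointwise sensitivity of `f` at `x`. -/
def sensAt {ι : Type*} [Fintype ι] [DecidableEq ι] (f : (ι → Bool) → Bool)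
    (x : ι → Bool) : ℕ :=
  (Finset.univ.filter fun i => f (flipOn x {i}) ≠ f x).card

/-- Pointwise block sensitivity of `f` at `x`. -/
def bsAt {ι : Type*} [DecidableEq ι] (f : (ι → Bool) → Bool) (x : ι → Bool) : ℕ :=
  sSup {m | ∃ B : Fin m → Finset ι,
    (∀ j, f (flipOn x (B j)) ≠ f x) ∧ ∀ j k, j ≠ k → Disjoint (B j) (B k)}

/-- `W` is a witness set for `f` at `x`. -/
def IsWitness {ι : Type*} (f : (ι → Bool) → Bool) (x : ι → Bool) (W : Finset ι) : Prop :=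
  ∀ y, (∀ i ∈ W, y i = x i) → f y = f x

/-- Pointwise minimum witness size of `f` at `x`. -/
def witAt {ι : Type*} (f : (ι → Bool) → Bool) (x : ι → Bool) : ℕ :=
  sInf {k | ∃ W : Finset ι, W.card = k ∧ IsWitness f x W}

/-- Decision trees querying coordinates in `ι`. -/
inductive DTree (ι : Type*) where
  | leaf : DTree ι
  | node : ι → DTree ι → DTree ι → DTree ι

/-- The set of coordinates queried by the tree `T` on input `x`. -/
def DTree.path {ι : Type*} [DecidableEq ι] : DTree ι → (ι → Bool) → Finset ι
  | .leaf, _ => ∅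
  | .node i t0 t1, x => insert i (if x i then t1.path x else t0.path x)

/-- The tree `T` determines `f`: at each leaf the queried bits witness the value of `f`. -/
def DTree.Determines {ι : Type*} [DecidableEq ι] (T : DTree ι)
    (f : (ι → Bool) → Bool) : Prop :=
  ∀ x, IsWitness f x (T.path x)

/-- A partition of the hypercube into subcubes, encoded by the map sending each point to
the code (fixed coordinates) of its part. -/
structure SubcubePartition (ι : Type*) where
  code : (ι → Bool) → (ι → Option Bool)
  self_mem : ∀ x i b, code x i = some b → x i = b
  compat : ∀ x y, (∀ i b, code x i = some b → y i = b) → code y = code x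

/-- Number of coordinates fixed by the subcube containing `x`. -/
def SubcubePartition.codim {ι : Type*} [Fintype ι] (P : SubcubePartition ι)
    (x : ι → Bool) : ℕ :=
  (Finset.univ.filter fun i => (P.code x i).isSome).card

/-- The partition determines `f`, i.e. `f` is constant on each part. -/
def SubcubePartition.Determines {ι : Type*} (P : SubcubePartition ι)
    (f : (ι → Bool) → Bool) : Prop :=
  ∀ x y, (∀ i b, P.code x i = some b → y i = b) → f y = f x

/-- Deterministic sensitivity. -/
def detSens {ι : Type*} [Fintype ι] [DecidableEq ι] (f : (ι → Bool) → Bool) : ℕ :=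
  Finset.univ.sup fun x => sensAt f x

/-- Deterministic block sensitivity. -/
def detBS {ι : Type*} [Fintype ι] [DecidableEq ι] (f : (ι → Bool) → Bool) : ℕ :=
  Finset.univ.sup fun x => bsAt f x

/-- Deterministic witness complexity. -/
def detWit {ι : Type*} [Fintype ι] [DecidableEq ι] (f : (ι → Bool) → Bool) : ℕ :=
  Finset.univ.sup fun x => witAt f x

/-- Deterministic subcube partition complexity. -/
def detSC {ι : Type*} [Fintype ι] (f : (ι → Bool) → Bool) : ℕ :=
  sInf {k | ∃ P : SubcubePartition ι, P.Determines f ∧ ∀ x, P.codim x ≤ k}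

/-- Deterministic algorithmic (decision tree) complexity. -/
def detAlg {ι : Type*} [Fintype ι] [DecidableEq ι] (f : (ι → Bool) → Bool) : ℕ :=
  sInf {k | ∃ T : DTree ι, T.Determines f ∧ ∀ x, (T.path x).card ≤ k}

/-- Weight of the configuration `x` under the product Bernoulli(p) measure `π_p`. -/
def wt {ι : Type*} [Fintype ι] (p : ℝ) (x : ι → Bool) : ℝ :=
  ∏ i, (if x i then p else 1 - p)

/-- Expectation under `π_p`. -/
def expec {ι : Type*} [Fintype ι] [DecidableEq ι] (p : ℝ) (g : (ι → Bool) → ℝ) : ℝ :=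
  ∑ x, wt p x * g x

/-- Distributional sensitivity. -/
def distSens {ι : Type*} [Fintype ι] [DecidableEq ι] (f : (ι → Bool) → Bool) (p : ℝ) : ℝ :=
  expec p fun x => (sensAt f x : ℝ)

/-- Distributional block sensitivity. -/
def distBS {ι : Type*} [Fintype ι] [DecidableEq ι] (f : (ι → Bool) → Bool) (p : ℝ) : ℝ :=
  expec p fun x => (bsAt f x : ℝ)

/-- Distributional witness complexity. -/
def distWit {ι : Type*} [Fintype ι] [DecidableEq ι] (f : (ι → Bool) → Bool) (p : ℝ) : ℝ :=
  expec p fun x => (witAt f x : ℝ)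

/-- Distributional subcube partition complexity. -/
def distSC {ι : Type*} [Fintype ι] [DecidableEq ι] (f : (ι → Bool) → Bool) (p : ℝ) : ℝ :=
  sInf {c | ∃ P : SubcubePartition ι, P.Determines f ∧
    c = expec p fun x => (P.codim x : ℝ)}

/-- Distributional algorithmic complexity. -/
def distAlg {ι : Type*} [Fintype ι] [DecidableEq ι] (f : (ι → Bool) → Bool) (p : ℝ) : ℝ :=
  sInf {c | ∃ T : DTree ι, T.Determines f ∧
    c = expec p fun x => ((T.path x).card : ℝ)}

/-- `μ x J` is the joint probability that the bits equal `x` and the random set equals `J`;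
the conditions say: the marginal of the bits is `π_p`, the random set is a.s. a witness set
for `f`, and the random set is local (conditionally on `{I = J}` and the bits on `J`, the
bits outside `J` are still i.i.d. Bernoulli(p)). -/
def IsLocalWitnessSystem {ι : Type*} [Fintype ι] [DecidableEq ι]
    (f : (ι → Bool) → Bool) (p : ℝ) (μ : (ι → Bool) → Finset ι → ℝ) : Prop :=
  (∀ x J, 0 ≤ μ x J) ∧
  (∀ x, ∑ J, μ x J = wt p x) ∧
  (∀ x J, μ x J ≠ 0 → IsWitness f x J) ∧
  (∀ (J : Finset ι) x y, (∀ i ∈ J, x i = y i) → μ x J * wt p y = μ y J * wt p x)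

/-- Distributional local witness complexity. -/
def distLocal {ι : Type*} [Fintype ι] [DecidableEq ι]
    (f : (ι → Bool) → Bool) (p : ℝ) : ℝ :=
  sInf {c | ∃ μ : (ι → Bool) → Finset ι → ℝ, IsLocalWitnessSystem f p μ ∧
    c = ∑ x, ∑ J, μ x J * (J.card : ℝ)}

/-- The composition `f ∘ g` of Boolean functions, on `n · m` bits. -/
def bcomp {n m : ℕ} (f : (Fin n → Bool) → Bool) (g : (Fin m → Bool) → Bool) :
    (Fin n × Fin m → Bool) → Bool :=
  fun x => f fun i => g fun j => x (i, j)


/-! ### Auxiliary development -/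

open scoped Classical

section Basics

variable {ι : Type*} [DecidableEq ι]

/-- A tree querying all coordinates in the list `l`. -/
def allTree : List ι → DTree ι
  | [] => .leaf
  | i :: l => .node i (allTree l) (allTree l)

lemma allTree_path (l : List ι) (x : ι → Bool) : (allTree l).path x = l.toFinset := by
  induction l with
  | nil => rfl
  | cons a l ih => simp [allTree, DTree.path, ih]

variable [Fintype ι]

lemma detAlg_set_nonempty (f : (ι → Bool) → Bool) :
    {k | ∃ T : DTree ι, T.Determines f ∧ ∀ x, (T.path x).card ≤ k}.Nonempty := by
  refine ⟨Fintype.card ι, allTree Finset.univ.toList, ?_, ?_⟩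
  · intro x
    rw [allTree_path, Finset.toList_toFinset]
    intro y hy
    have : y = x := funext fun i => hy i (Finset.mem_univ i)
    rw [this]
  · intro x
    rw [allTree_path, Finset.toList_toFinset]
    simp

lemma detAlg_exists (f : (ι → Bool) → Bool) :
    ∃ T : DTree ι, T.Determines f ∧ ∀ x, (T.path x).card ≤ detAlg f :=
  Nat.sInf_mem (detAlg_set_nonempty f)

lemma detAlg_le {f : (ι → Bool) → Bool} {k : ℕ} (T : DTree ι) (hT : T.Determines f)
    (hk : ∀ x, (T.path x).card ≤ k) : detAlg f ≤ k :=
  Nat.sInf_le ⟨T, hT, hk⟩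

lemma detAlg_le_card (f : (ι → Bool) → Bool) : detAlg f ≤ Fintype.card ι := by
  refine detAlg_le (allTree Finset.univ.toList) ?_ ?_
  · intro x
    rw [allTree_path, Finset.toList_toFinset]
    intro y hy
    have : y = x := funext fun i => hy i (Finset.mem_univ i)
    rw [this]
  · intro x
    rw [allTree_path, Finset.toList_toFinset]
    simp

lemma detAlg_eq_zero_const {f : (ι → Bool) → Bool} (h : detAlg f = 0) :
    ∀ x y, f x = f y := by
  obtain ⟨T, hT, hk⟩ := detAlg_exists f
  rw [h] at hk
  intro x y
  have hx : IsWitness f x (T.path x) := hT x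
  have : T.path x = ∅ := Finset.card_eq_zero.mp (Nat.le_zero.mp (hk x))
  exact (hx y (by simp [this])).symm

end Basics


section Upper

variable {n m : ℕ} (g : (Fin m → Bool) → Bool)

/-- Graft the `g`-tree `S` on block `i`, continuing with `T0` or `T1` according to the
computed value of `g`; `σ` accumulates the answers on block `i`. -/
def graft (i : Fin n) (T0 T1 : DTree (Fin n × Fin m)) :
    DTree (Fin m) → (Fin m → Bool) → DTree (Fin n × Fin m)
  | .leaf, σ => cond (g σ) T1 T0
  | .node j s0 s1, σ =>
      .node (i, j) (graft i T0 T1 s0 (Function.update σ j false))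
        (graft i T0 T1 s1 (Function.update σ j true))

variable (Tg : DTree (Fin m))

/-- Composition of a tree for `f` with the tree `Tg` for `g`. -/
def compT : DTree (Fin n) → DTree (Fin n × Fin m)
  | .leaf => .leaf
  | .node i t0 t1 => graft g i (compT t0) (compT t1) Tg fun _ => false

/-- Overwrite `σ` with `xi` on `P`. -/
def patch (σ xi : Fin m → Bool) (P : Finset (Fin m)) : Fin m → Bool :=
  fun j => if j ∈ P then xi j else σ j

lemma graft_path (i : Fin n) (T0 T1 : DTree (Fin n × Fin m)) (S : DTree (Fin m))
    (σ : Fin m → Bool) (x : Fin n × Fin m → Bool) :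
    (graft g i T0 T1 S σ).path x =
      ((S.path fun j => x (i, j)).image fun j => (i, j)) ∪
        (cond (g (patch σ (fun j => x (i, j)) (S.path fun j => x (i, j)))) T1 T0).path x := by
  induction S generalizing σ with
  | leaf =>
    have : patch σ (fun j => x (i, j)) (∅ : Finset (Fin m)) = σ := by
      funext j; simp [patch]
    simp [graft, DTree.path, this]
  | node j s0 s1 ih0 ih1 =>
    set xi : Fin m → Bool := fun j => x (i, j) with hxi
    have hb : x (i, j) = xi j := rfl
    simp only [graft, DTree.path, hb]
    cases hxij : xi j with
    | false =>
      rw [if_neg (by simp [hxij])]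
      rw [ih0]
      have hp : patch (Function.update σ j false) xi (s0.path xi)
          = patch σ xi (insert j (s0.path xi)) := by
        funext j'
        by_cases h1 : j' ∈ s0.path xi
        · simp [patch, h1]
        · by_cases h2 : j' = j
          · subst h2; simp [patch, h1, hxij]
          · simp [patch, h1, h2, Function.update_of_ne h2]
      rw [hp, Finset.image_insert, Finset.insert_union]
      simp
    | true =>
      rw [if_pos (by simp [hxij])]
      rw [ih1]
      have hp : patch (Function.update σ j true) xi (s1.path xi)
          = patch σ xi (insert j (s1.path xi)) := by
        funext j'
        by_cases h1 : j' ∈ s1.path xi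
        · simp [patch, h1]
        · by_cases h2 : j' = j
          · subst h2; simp [patch, h1, hxij]
          · simp [patch, h1, h2, Function.update_of_ne h2]
      rw [hp, Finset.image_insert, Finset.insert_union]
      simp

lemma compT_path (hg : Tg.Determines g) (T : DTree (Fin n)) (x : Fin n × Fin m → Bool) :
    (compT g Tg T).path x =
      (T.path fun i => g fun j => x (i, j)).biUnion
        (fun i => (Tg.path fun j => x (i, j)).image fun j => (i, j)) := by
  induction T with
  | leaf => simp [compT, DTree.path]
  | node i t0 t1 ih0 ih1 =>
    set z : Fin n → Bool := fun i => g fun j => x (i, j) with hz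
    set xi : Fin m → Bool := fun j => x (i, j) with hxi
    have hval : g (patch (fun _ => false) xi (Tg.path xi)) = g xi := by
      refine hg xi _ ?_
      intro j hj
      simp [patch, hj]
    simp only [compT, DTree.path]
    rw [graft_path, hval]
    have hzi : g xi = z i := rfl
    rw [hzi]
    cases hb : z i with
    | false =>
      simp only [Bool.cond_false, ih0, DTree.path, hb, if_neg (by simp : ¬(false = true))]
      rw [Finset.biUnion_insert]
    | true =>
      simp only [Bool.cond_true, ih1, DTree.path, hb, if_pos rfl]
      rw [Finset.biUnion_insert]
      simp

lemma detAlg_comp_le (f : (Fin n → Bool) → Bool) :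
    detAlg (bcomp f g) ≤ detAlg f * detAlg g := by
  obtain ⟨Tf, hTf, hkf⟩ := detAlg_exists f
  obtain ⟨Tg', hTg, hkg⟩ := detAlg_exists g
  refine detAlg_le (compT g Tg' Tf) ?_ ?_
  · intro x y hy
    set z : Fin n → Bool := fun i => g fun j => x (i, j) with hz
    rw [compT_path g Tg' hTg] at hy
    have hzy : ∀ i ∈ Tf.path z, (g fun j => y (i, j)) = z i := by
      intro i hi
      refine hTg (fun j => x (i, j)) _ ?_
      intro j hj
      exact hy (i, j) (Finset.mem_biUnion.mpr ⟨i, hi, Finset.mem_image.mpr ⟨j, hj, rfl⟩⟩)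
    exact hTf z _ hzy
  · intro x
    set z : Fin n → Bool := fun i => g fun j => x (i, j) with hz
    rw [compT_path g Tg' hTg]
    calc ((Tf.path z).biUnion fun i => (Tg'.path fun j => x (i, j)).image fun j => (i, j)).card
        ≤ ∑ i ∈ Tf.path z, ((Tg'.path fun j => x (i, j)).image fun j => (i, j)).card :=
          Finset.card_biUnion_le
      _ ≤ ∑ i ∈ Tf.path z, detAlg g := by
          refine Finset.sum_le_sum fun i _ => ?_
          exact (Finset.card_image_le).trans (hkg _)
      _ = (Tf.path z).card * detAlg g := by rw [Finset.sum_const, smul_eq_mul]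
      _ ≤ detAlg f * detAlg g := Nat.mul_le_mul_right _ (hkf z)

end Upper


section GameValue

variable {ι : Type*} [Fintype ι] [DecidableEq ι] (g : (ι → Bool) → Bool)

/-- The adversary game value of `g` at the partial assignment `(S, σ)`, with fuel `t`. -/
def V : ℕ → Finset ι → (ι → Bool) → ℕ
  | 0, _, _ => 0
  | t + 1, S, σ =>
    if IsWitness g σ S then 0
    else if h : (Finset.univ \ S).Nonempty then
      1 + (Finset.univ \ S).inf' h (fun i =>
        max (V t (insert i S) (Function.update σ i false))
          (V t (insert i S) (Function.update σ i true)))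
    else 0

lemma nonempty_compl_of_not_witness {S : Finset ι} {σ : ι → Bool}
    (hw : ¬IsWitness g σ S) : (Finset.univ \ S).Nonempty := by
  by_contra h
  apply hw
  intro y hy
  have hS : ∀ i, i ∈ S := by
    intro i
    by_contra hi
    exact h ⟨i, Finset.mem_sdiff.mpr ⟨Finset.mem_univ i, hi⟩⟩
  have : y = σ := funext fun i => hy i (hS i)
  rw [this]

lemma V_eq_zero_of_witness {S : Finset ι} {σ : ι → Bool} (hw : IsWitness g σ S) (t : ℕ) :
    V g t S σ = 0 := by
  cases t with
  | zero => rfl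
  | succ t => simp [V, hw]

lemma not_witness_of_V_pos {S : Finset ι} {σ : ι → Bool} {t : ℕ} (h : 0 < V g t S σ) :
    ¬IsWitness g σ S := fun hw => by simp [V_eq_zero_of_witness g hw] at h

lemma V_succ_eq {S : Finset ι} {σ : ι → Bool} (hw : ¬IsWitness g σ S) (t : ℕ) :
    V g (t + 1) S σ = 1 + (Finset.univ \ S).inf' (nonempty_compl_of_not_witness g hw)
      (fun i => max (V g t (insert i S) (Function.update σ i false))
        (V g t (insert i S) (Function.update σ i true))) := by
  simp only [V, if_neg hw]
  split
  · rfl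
  · exact absurd (nonempty_compl_of_not_witness g hw) (by assumption)

lemma V_adv {S : Finset ι} {σ : ι → Bool} (hw : ¬IsWitness g σ S) {i : ι}
    (hi : i ∉ S) (t : ℕ) :
    ∃ b, V g (t + 1) S σ ≤ 1 + V g t (insert i S) (Function.update σ i b) := by
  have hi' : i ∈ Finset.univ \ S := Finset.mem_sdiff.mpr ⟨Finset.mem_univ i, hi⟩
  rw [V_succ_eq g hw t]
  have hle := Finset.inf'_le (b := i)
    (fun i => max (V g t (insert i S) (Function.update σ i false))
      (V g t (insert i S) (Function.update σ i true))) hi'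
  rcases le_total (V g t (insert i S) (Function.update σ i false))
    (V g t (insert i S) (Function.update σ i true)) with h | h
  · exact ⟨true, by omega⟩
  · exact ⟨false, by omega⟩

/-- Build an optimal tree following the game value. -/
def buildT : ℕ → Finset ι → (ι → Bool) → DTree ι
  | 0, _, _ => .leaf
  | t + 1, S, σ =>
    if hw : IsWitness g σ S then .leaf
    else
      let i := Classical.choose (Finset.exists_mem_eq_inf'
        (nonempty_compl_of_not_witness g hw)
        (fun i => max (V g t (insert i S) (Function.update σ i false))
          (V g t (insert i S) (Function.update σ i true))))
      .node i (buildT t (insert i S) (Function.update σ i false))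
        (buildT t (insert i S) (Function.update σ i true))

lemma buildT_spec : ∀ (t : ℕ) (S : Finset ι) (σ : ι → Bool),
    (Finset.univ \ S).card ≤ t →
    ∀ x : ι → Bool, (∀ i ∈ S, x i = σ i) →
    IsWitness g x (S ∪ (buildT g t S σ).path x) ∧
      ((buildT g t S σ).path x).card ≤ V g t S σ := by
  intro t
  induction t with
  | zero =>
    intro S σ hfuel x hx
    have hS : S = Finset.univ := by
      have := Finset.card_eq_zero.mp (Nat.le_zero.mp hfuel)
      have := Finset.sdiff_eq_empty_iff_subset.mp this
      exact le_antisymm (Finset.subset_univ S) this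
    constructor
    · intro y hy
      have : y = x := by
        funext i
        exact hy i (by simp [hS, buildT, DTree.path])
      rw [this]
    · simp [buildT, DTree.path]
  | succ t ih =>
    intro S σ hfuel x hx
    by_cases hw : IsWitness g σ S
    · constructor
      · intro y hy
        have hyx : g y = g σ := hw y fun i hi => by
          rw [hy i (by simp [buildT, DTree.path, hw, hi]), hx i hi]
        have hxσ : g x = g σ := hw x hx
        rw [hyx, hxσ]
      · simp [buildT, DTree.path, hw]
    · have hspec := Classical.choose_spec (Finset.exists_mem_eq_inf'
        (nonempty_compl_of_not_witness g hw)
        (fun i => max (V g t (insert i S) (Function.update σ i false))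
          (V g t (insert i S) (Function.update σ i true))))
      set i := Classical.choose (Finset.exists_mem_eq_inf'
        (nonempty_compl_of_not_witness g hw)
        (fun i => max (V g t (insert i S) (Function.update σ i false))
          (V g t (insert i S) (Function.update σ i true)))) with hidef
      obtain ⟨hiS, hival⟩ := hspec
      have hiS' : i ∉ S := (Finset.mem_sdiff.mp hiS).2
      have hfuel' : (Finset.univ \ insert i S).card ≤ t := by
        have h1 : Finset.univ \ insert i S = (Finset.univ \ S).erase i := by
          ext j
          simp only [Finset.mem_sdiff, Finset.mem_erase, Finset.mem_insert,
            Finset.mem_univ, true_and]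
          tauto
        rw [h1, Finset.card_erase_of_mem hiS]
        omega
      have hnode : buildT g (t + 1) S σ
          = DTree.node i (buildT g t (insert i S) (Function.update σ i false))
              (buildT g t (insert i S) (Function.update σ i true)) := by
        rw [buildT, dif_neg hw, ← hidef]
      have hpath : (buildT g (t + 1) S σ).path x
          = insert i ((buildT g t (insert i S) (Function.update σ i (x i))).path x) := by
        rw [hnode]
        cases hxi : x i <;> simp [DTree.path, hxi]
      have hagree : ∀ j ∈ insert i S, x j = Function.update σ i (x i) j := by
        intro j hj
        rcases Finset.mem_insert.mp hj with rfl | hj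
        · simp
        · have : j ≠ i := fun h => hiS' (h ▸ hj)
          rw [Function.update_of_ne this]
          exact hx j hj
      obtain ⟨hW, hcard⟩ := ih (insert i S) (Function.update σ i (x i)) hfuel' x hagree
      constructor
      · rw [hpath]
        intro y hy
        refine hW y fun j hj => hy j ?_
        rw [Finset.union_insert, ← Finset.insert_union]
        exact hj
      · rw [hpath, V_succ_eq g hw t, hival]
        have h1 : V g t (insert i S) (Function.update σ i (x i))
            ≤ max (V g t (insert i S) (Function.update σ i false))
              (V g t (insert i S) (Function.update σ i true)) := by
          cases x i
          · exact le_max_left _ _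
          · exact le_max_right _ _
        have h2 := Finset.card_insert_le i
          ((buildT g t (insert i S) (Function.update σ i (x i))).path x)
        omega

lemma detAlg_le_V (σ : ι → Bool) (t : ℕ) (ht : Fintype.card ι ≤ t) :
    detAlg g ≤ V g t ∅ σ := by
  refine detAlg_le (buildT g t ∅ σ) ?_ ?_
  · intro x
    have := (buildT_spec g t ∅ σ (by simpa using ht) x (by simp)).1
    simpa using this
  · intro x
    exact (buildT_spec g t ∅ σ (by simpa using ht) x (by simp)).2

end GameValue


section Lower

variable {n m : ℕ}

/-- State of one block during the simulation. -/
structure BSt (m : ℕ) where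
  S : Finset (Fin m)
  sg : Fin m → Bool
  fin : Bool

variable (g : (Fin m → Bool) → Bool)

/-- Pick a completion of `(S, σ)` on which `g` takes the value `w`, if possible. -/
def pickC (S : Finset (Fin m)) (σ : Fin m → Bool) (w : Bool) : Fin m → Bool :=
  if h : ∃ y, (∀ j ∈ S, y j = σ j) ∧ g y = w then Classical.choose h else σ

lemma pickC_agree (S : Finset (Fin m)) (σ : Fin m → Bool) (w : Bool) :
    ∀ j ∈ S, pickC g S σ w j = σ j := by
  intro j hj
  unfold pickC
  split
  next h => exact (Classical.choose_spec h).1 j hj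
  next => rfl

lemma pickC_val {S : Finset (Fin m)} {σ : Fin m → Bool} {w : Bool}
    (h : ∃ y, (∀ j ∈ S, y j = σ j) ∧ g y = w) : g (pickC g S σ w) = w := by
  unfold pickC
  rw [dif_pos h]
  exact (Classical.choose_spec h).2

lemma exists_completion {S : Finset (Fin m)} {σ : Fin m → Bool}
    (hw : ¬IsWitness g σ S) (w : Bool) :
    ∃ y, (∀ j ∈ S, y j = σ j) ∧ g y = w := by
  unfold IsWitness at hw
  push_neg at hw
  obtain ⟨y, hy, hne⟩ := hw
  by_cases hgy : g y = w
  · exact ⟨y, hy, hgy⟩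
  · refine ⟨σ, fun j _ => rfl, ?_⟩
    cases w <;> cases hb : g y <;> cases hc : g σ <;> simp_all

/-- The adversary answer. -/
def advb (S : Finset (Fin m)) (σ : Fin m → Bool) (j : Fin m) : Bool :=
  if V g (m - S.card - 1) (insert j S) (Function.update σ j false)
      ≤ V g (m - S.card - 1) (insert j S) (Function.update σ j true)
  then true else false

lemma advb_spec {S : Finset (Fin m)} {σ : Fin m → Bool} (hw : ¬IsWitness g σ S)
    {j : Fin m} (hj : j ∉ S) (hcard : S.card < m) :
    V g (m - S.card) S σ
      ≤ 1 + V g (m - S.card - 1) (insert j S) (Function.update σ j (advb g S σ j)) := by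
  obtain ⟨b, hb⟩ := V_adv g hw hj (m - S.card - 1)
  have h1 : m - S.card - 1 + 1 = m - S.card := by omega
  rw [h1] at hb
  refine hb.trans ?_
  unfold advb
  split
  · cases b <;> omega
  · cases b <;> omega

variable {n : ℕ}

/-- The simulated tree for `f`. -/
def sim (d : ℕ) : DTree (Fin n × Fin m) → (Fin n → BSt m) → DTree (Fin n)
  | .leaf, _ => .leaf
  | .node p t0 t1, st =>
    let B := st p.1
    if B.fin = true ∨ p.2 ∈ B.S then
      cond (B.sg p.2) (sim d t1 st) (sim d t0 st)
    else if B.S.card + 1 < d then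
      let b := advb g B.S B.sg p.2
      let st' := Function.update st p.1 ⟨insert p.2 B.S, Function.update B.sg p.2 b, false⟩
      cond b (sim d t1 st') (sim d t0 st')
    else
      .node p.1
        (cond (pickC g B.S B.sg false p.2)
          (sim d t1 (Function.update st p.1 ⟨insert p.2 B.S, pickC g B.S B.sg false, true⟩))
          (sim d t0 (Function.update st p.1 ⟨insert p.2 B.S, pickC g B.S B.sg false, true⟩)))
        (cond (pickC g B.S B.sg true p.2)
          (sim d t1 (Function.update st p.1 ⟨insert p.2 B.S, pickC g B.S B.sg true, true⟩))
          (sim d t0 (Function.update st p.1 ⟨insert p.2 B.S, pickC g B.S B.sg true, true⟩)))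

/-- The state evolution during the simulation, on the `f`-input `z`. -/
def runSt (d : ℕ) : DTree (Fin n × Fin m) → (Fin n → BSt m) → (Fin n → Bool) → (Fin n → BSt m)
  | .leaf, st, _ => st
  | .node p t0 t1, st, z =>
    let B := st p.1
    if B.fin = true ∨ p.2 ∈ B.S then
      cond (B.sg p.2) (runSt d t1 st z) (runSt d t0 st z)
    else if B.S.card + 1 < d then
      let b := advb g B.S B.sg p.2
      let st' := Function.update st p.1 ⟨insert p.2 B.S, Function.update B.sg p.2 b, false⟩
      cond b (runSt d t1 st' z) (runSt d t0 st' z)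
    else
      let y := pickC g B.S B.sg (z p.1)
      let st' := Function.update st p.1 ⟨insert p.2 B.S, y, true⟩
      cond (y p.2) (runSt d t1 st' z) (runSt d t0 st' z)

/-- The combined input realizing the state `st` with `g`-values `z`. -/
def xOf (st : Fin n → BSt m) (z : Fin n → Bool) : Fin n × Fin m → Bool :=
  fun p => cond (st p.1).fin ((st p.1).sg p.2) (pickC g (st p.1).S (st p.1).sg (z p.1) p.2)

/-- The invariant maintained by the simulation. -/
def SInv (d : ℕ) (z : Fin n → Bool) (st : Fin n → BSt m) : Prop :=
  ∀ i, ((st i).fin = true → g (st i).sg = z i ∧ d ≤ (st i).S.card) ∧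
    ((st i).fin = false → (st i).S.card < d ∧
      d - (st i).S.card ≤ V g (m - (st i).S.card) (st i).S (st i).sg)

/-- Extension of states. -/
def SExt (st st' : Fin n → BSt m) : Prop :=
  ∀ i, (st i).S ⊆ (st' i).S ∧ (∀ j ∈ (st i).S, (st' i).sg j = (st i).sg j) ∧
    ((st i).fin = true → st' i = st i)

lemma SExt_refl (st : Fin n → BSt m) : SExt st st :=
  fun i => ⟨Finset.Subset.refl _, fun _ _ => rfl, fun _ => rfl⟩

lemma SExt_trans {st st' st'' : Fin n → BSt m} (h : SExt st st') (h' : SExt st' st'') :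
    SExt st st'' := by
  intro i
  obtain ⟨h1, h2, h3⟩ := h i
  obtain ⟨h1', h2', h3'⟩ := h' i
  refine ⟨h1.trans h1', fun j hj => (h2' j (h1 hj)).trans (h2 j hj), fun hf => ?_⟩
  rw [h3' (by rw [h3 hf, hf]), h3 hf]

/-- The set of queried coordinates recorded in the state. -/
def Qset (st : Fin n → BSt m) : Finset (Fin n × Fin m) :=
  Finset.univ.biUnion fun i => ((st i).S).image fun j => (i, j)

lemma mem_Qset {st : Fin n → BSt m} {p : Fin n × Fin m} :
    p ∈ Qset st ↔ p.2 ∈ (st p.1).S := by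
  constructor
  · intro h
    obtain ⟨i, _, h⟩ := Finset.mem_biUnion.mp h
    obtain ⟨j, hj, hp⟩ := Finset.mem_image.mp h
    obtain ⟨rfl, rfl⟩ : i = p.1 ∧ j = p.2 := by
      constructor <;> rw [← hp]
    exact hj
  · intro h
    exact Finset.mem_biUnion.mpr ⟨p.1, Finset.mem_univ _,
      Finset.mem_image.mpr ⟨p.2, h, rfl⟩⟩

lemma Qset_update {st : Fin n → BSt m} {i : Fin n} {j : Fin m} {σ' : Fin m → Bool}
    {b' : Bool} :
    Qset (Function.update st i ⟨insert j (st i).S, σ', b'⟩) = insert (i, j) (Qset st) := by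
  ext p
  obtain ⟨p1, p2⟩ := p
  rw [mem_Qset, Finset.mem_insert, mem_Qset]
  by_cases hp : p1 = i
  · subst hp
    rw [Function.update_self]
    simp [Prod.ext_iff]
  · rw [Function.update_of_ne hp]
    simp [Prod.ext_iff, hp]

lemma Qset_card (st : Fin n → BSt m) : (Qset st).card = ∑ i, (st i).S.card := by
  rw [Qset, Finset.card_biUnion]
  · refine Finset.sum_congr rfl fun i _ => ?_
    exact Finset.card_image_of_injective _ fun a b hab => congrArg Prod.snd hab
  · intro a _ b _ hab
    simp only [Finset.disjoint_left]
    intro p hp hp'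
    obtain ⟨j, _, rfl⟩ := Finset.mem_image.mp hp
    obtain ⟨j', _, h⟩ := Finset.mem_image.mp hp'
    exact hab (congrArg Prod.fst h).symm

/-- The set of finished blocks. -/
def finS (st : Fin n → BSt m) : Finset (Fin n) :=
  Finset.univ.filter fun i => (st i).fin = true

lemma mem_finS {st : Fin n → BSt m} {i : Fin n} : i ∈ finS st ↔ (st i).fin = true := by
  simp [finS]

lemma finS_update_false {st : Fin n → BSt m} {i : Fin n} {B : BSt m}
    (hB : B.fin = false) (hst : (st i).fin = false) :
    finS (Function.update st i B) = finS st := by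
  ext i'
  rw [mem_finS, mem_finS]
  by_cases h : i' = i
  · subst h; rw [Function.update_self, hB, hst]
  · rw [Function.update_of_ne h]

lemma finS_update_true {st : Fin n → BSt m} {i : Fin n} {B : BSt m}
    (hB : B.fin = true) :
    finS (Function.update st i B) = insert i (finS st) := by
  ext i'
  rw [mem_finS, Finset.mem_insert, mem_finS]
  by_cases h : i' = i
  · subst h; rw [Function.update_self, hB]; simp
  · rw [Function.update_of_ne h]; simp [h]

lemma xOf_mem {st : Fin n → BSt m} {z : Fin n → Bool} {p : Fin n × Fin m}
    (hp : p.2 ∈ (st p.1).S) : xOf g st z p = (st p.1).sg p.2 := by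
  unfold xOf
  cases hf : (st p.1).fin
  · simp only [Bool.cond_false]
    exact pickC_agree g _ _ _ _ hp
  · simp only [Bool.cond_true]

lemma xOf_fin {st : Fin n → BSt m} {z : Fin n → Bool} {p : Fin n × Fin m}
    (hp : (st p.1).fin = true) : xOf g st z p = (st p.1).sg p.2 := by
  unfold xOf
  rw [hp]
  rfl

lemma bcomp_xOf {d : ℕ} {z : Fin n → Bool} {st : Fin n → BSt m}
    (hInv : SInv g d z st) (hd : 1 ≤ d) (f : (Fin n → Bool) → Bool)
    (z' : Fin n → Bool) (hz' : ∀ i, (st i).fin = true → z' i = z i) :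
    bcomp f g (xOf g st z') = f z' := by
  unfold bcomp
  congr 1
  funext i
  cases hf : (st i).fin
  · have h2 := (hInv i).2 hf
    have hV : 0 < V g (m - (st i).S.card) (st i).S (st i).sg := by omega
    have hw := not_witness_of_V_pos g hV
    have hcomp := exists_completion g hw (z' i)
    have : (fun j => xOf g st z' (i, j)) = pickC g (st i).S (st i).sg (z' i) := by
      funext j
      unfold xOf
      rw [hf]
      rfl
    rw [this, pickC_val g hcomp]
  · have h1 := (hInv i).1 hf
    have : (fun j => xOf g st z' (i, j)) = (st i).sg := by
      funext j
      unfold xOf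
      rw [hf]
      rfl
    rw [this, h1.1, hz' i hf]


/-- The conclusion of the main simulation lemma. -/
def Concl (f : (Fin n → Bool) → Bool) (d : ℕ) (T : DTree (Fin n × Fin m))
    (Ts : DTree (Fin n)) (st st' : Fin n → BSt m) (z : Fin n → Bool) : Prop :=
  SExt st st' ∧ SInv g d z st' ∧
  Qset st' ⊆ Qset st ∪ T.path (xOf g st' z) ∧
  (Ts.path z).card + (finS st).card ≤ (finS st').card ∧
  finS st' ⊆ finS st ∪ Ts.path z ∧
  (∀ W : Finset (Fin n × Fin m),
    (∀ p ∈ W, (st p.1).fin = true ∨ p.2 ∈ (st p.1).S) →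
    IsWitness (bcomp f g) (xOf g st' z) (W ∪ T.path (xOf g st' z)) →
    ∀ z' : Fin n → Bool, (∀ i ∈ Ts.path z, z' i = z i) →
      (∀ i', (st i').fin = true → z' i' = z i') →
      bcomp f g (xOf g st' z') = f z)

lemma silent_step (f : (Fin n → Bool) → Bool) {d : ℕ} {z : Fin n → Bool}
    {i : Fin n} {j : Fin m} {t0 t1 : DTree (Fin n × Fin m)} {b : Bool}
    {st st₁ : Fin n → BSt m}
    (hsg : (st₁ i).sg j = b)
    (hDij : (st₁ i).fin = true ∨ j ∈ (st₁ i).S)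
    (hE : SExt st st₁)
    (hfin : ∀ i', (st₁ i').fin = (st i').fin)
    (hQ : Qset st₁ ⊆ insert (i, j) (Qset st))
    (IH : Concl g f d (cond b t1 t0) (sim g d (cond b t1 t0) st₁) st₁
      (runSt g d (cond b t1 t0) st₁ z) z) :
    Concl g f d (.node (i, j) t0 t1) (sim g d (cond b t1 t0) st₁) st
      (runSt g d (cond b t1 t0) st₁ z) z := by
  obtain ⟨hE', hInv', hQ', hcnt', hfinsub', hwit'⟩ := IH
  set st' := runSt g d (cond b t1 t0) st₁ z with hst'
  set x := xOf g st' z with hx0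
  have hfS : finS st₁ = finS st := by
    ext i'; rw [mem_finS, mem_finS, hfin]
  have hx : x ((i, j) : Fin n × Fin m) = b := by
    rcases hDij with hf | hj
    · have hsi : st' i = st₁ i := (hE' i).2.2 hf
      rw [hx0, xOf_fin g (p := ((i,j) : Fin n × Fin m)) (by rw [show ((i,j) : Fin n × Fin m).1 = i from rfl, hsi]; exact hf)]
      show (st' i).sg j = b
      rw [hsi, hsg]
    · have hj' : j ∈ (st' i).S := (hE' i).1 hj
      rw [hx0, xOf_mem g (p := ((i,j) : Fin n × Fin m)) hj']
      show (st' i).sg j = b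
      rw [(hE' i).2.1 j hj, hsg]
  have hpath : (DTree.node (i, j) t0 t1).path x = insert (i, j) ((cond b t1 t0).path x) := by
    cases hb : b
    · rw [hb] at hx
      simp [DTree.path, hx, hb]
    · rw [hb] at hx
      simp [DTree.path, hx, hb]
  refine ⟨SExt_trans hE hE', hInv', ?_, ?_, ?_, ?_⟩
  · rw [hpath]
    intro p hp
    rcases Finset.mem_union.mp (hQ' hp) with h1 | h2
    · rcases Finset.mem_insert.mp (hQ h1) with rfl | h
      · exact Finset.mem_union_right _ (Finset.mem_insert_self _ _)
      · exact Finset.mem_union_left _ h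
    · exact Finset.mem_union_right _ (Finset.mem_insert_of_mem h2)
  · rw [← hfS]; exact hcnt'
  · rw [← hfS]; exact hfinsub'
  · intro W hW hwit z' hz1 hz2
    refine hwit' (insert (i, j) W) ?_ ?_ z' hz1 ?_
    · intro p hp
      rcases Finset.mem_insert.mp hp with rfl | hp
      · exact hDij
      · rcases hW p hp with hf | hS
        · left; rw [hfin]; exact hf
        · right; exact (hE p.1).1 hS
    · have hsh : insert (i, j) W ∪ (cond b t1 t0).path x
          = W ∪ insert (i, j) ((cond b t1 t0).path x) := by
        rw [Finset.insert_union, Finset.union_insert]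
      rw [hsh, ← hpath]
      exact hwit
    · intro i' hf
      exact hz2 i' (by rw [← hfin]; exact hf)

lemma sim_cond {d : ℕ} (b : Bool) (t0 t1 : DTree (Fin n × Fin m)) (st : Fin n → BSt m) :
    sim g d (cond b t1 t0) st = cond b (sim g d t1 st) (sim g d t0 st) := by
  cases b <;> rfl

lemma runSt_cond {d : ℕ} (b : Bool) (t0 t1 : DTree (Fin n × Fin m)) (st : Fin n → BSt m)
    (z : Fin n → Bool) :
    runSt g d (cond b t1 t0) st z = cond b (runSt g d t1 st z) (runSt g d t0 st z) := by
  cases b <;> rfl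

set_option maxHeartbeats 2000000 in
lemma main_sim (f : (Fin n → Bool) → Bool) {d : ℕ} (hd : 1 ≤ d) (hdm : d ≤ m)
    (z : Fin n → Bool) :
    ∀ (T : DTree (Fin n × Fin m)) (st : Fin n → BSt m), SInv g d z st →
      Concl g f d T (sim g d T st) st (runSt g d T st z) z := by
  intro T
  induction T with
  | leaf =>
    intro st hInv
    refine ⟨SExt_refl st, hInv, ?_, ?_, ?_, ?_⟩
    · exact Finset.subset_union_left
    · simp [sim, runSt, DTree.path]
    · simp [sim, runSt, DTree.path]
    · intro W hW hwit z' hz1 hz2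
      have hrun : runSt g d .leaf st z = st := rfl
      have hagree : ∀ p ∈ W, xOf g st z' p = xOf g st z p := by
        intro p hp
        rcases hW p hp with hf | hS
        · rw [xOf_fin g hf, xOf_fin g hf]
        · rw [xOf_mem g hS, xOf_mem g hS]
      have hwitW : IsWitness (bcomp f g) (xOf g st z) W := by
        have : (W ∪ (DTree.leaf : DTree (Fin n × Fin m)).path (xOf g st z)) = W := by
          show W ∪ ∅ = W
          exact Finset.union_empty W
        rw [← this]
        exact hwit
      have h1 : bcomp f g (xOf g st z') = bcomp f g (xOf g st z) := hwitW _ hagree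
      have h2 : bcomp f g (xOf g st z) = f z := bcomp_xOf g hInv hd f z fun i _ => rfl
      rw [hrun, h1, h2]
  | node p t0 t1 ih0 ih1 =>
    intro st hInv
    obtain ⟨i, j⟩ := p
    by_cases hc1 : (st i).fin = true ∨ j ∈ (st i).S
    · -- answered from the state
      have hsim : sim g d (.node (i, j) t0 t1) st = sim g d (cond ((st i).sg j) t1 t0) st := by
        show (if (st i).fin = true ∨ j ∈ (st i).S then _ else _) = _
        rw [if_pos hc1, sim_cond]
      have hrun : runSt g d (.node (i, j) t0 t1) st z
          = runSt g d (cond ((st i).sg j) t1 t0) st z := by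
        show (if (st i).fin = true ∨ j ∈ (st i).S then _ else _) = _
        rw [if_pos hc1]
        cases (st i).sg j <;> rfl
      have IH' : Concl g f d (cond ((st i).sg j) t1 t0)
          (sim g d (cond ((st i).sg j) t1 t0) st) st
          (runSt g d (cond ((st i).sg j) t1 t0) st z) z := by
        cases (st i).sg j
        · exact ih0 st hInv
        · exact ih1 st hInv
      rw [hrun, hsim]
      exact silent_step g f rfl hc1 (SExt_refl st) (fun _ => rfl)
        (Finset.subset_insert _ _) IH'
    · have hfinF : (st i).fin = false := by
        cases hf : (st i).fin
        · rfl
        · exact absurd (Or.inl hf) hc1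
      have hjS : j ∉ (st i).S := fun h => hc1 (Or.inr h)
      have hinv_i := (hInv i).2 hfinF
      by_cases hc2 : (st i).S.card + 1 < d
      · -- adversary answer
        set b := advb g (st i).S (st i).sg j with hb
        set st₁ := Function.update st i
          (⟨insert j (st i).S, Function.update (st i).sg j b, false⟩ : BSt m) with hst₁
        have hVpos : 0 < V g (m - (st i).S.card) (st i).S (st i).sg := by omega
        have hw := not_witness_of_V_pos g hVpos
        have hadv := advb_spec g hw hjS (by omega : (st i).S.card < m)
        have hInv₁ : SInv g d z st₁ := by
          intro i'
          by_cases hii : i' = i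
          · subst hii
            rw [hst₁, Function.update_self]
            refine ⟨fun h => by simp at h, fun _ => ⟨?_, ?_⟩⟩
            · show (insert j (st i').S).card < d
              rw [Finset.card_insert_of_notMem hjS]
              omega
            · show d - (insert j (st i').S).card ≤ V g (m - (insert j (st i').S).card)
                (insert j (st i').S) (Function.update (st i').sg j b)
              rw [Finset.card_insert_of_notMem hjS,
                (by omega : m - ((st i').S.card + 1) = m - (st i').S.card - 1), hb]
              omega
          · rw [hst₁, Function.update_of_ne hii]
            exact hInv i'
        have hsim : sim g d (.node (i, j) t0 t1) st = sim g d (cond b t1 t0) st₁ := by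
          show (if (st i).fin = true ∨ j ∈ (st i).S then _ else _) = _
          rw [if_neg hc1]
          show (if (st i).S.card + 1 < d then _ else _) = _
          rw [if_pos hc2, sim_cond]
        have hrun : runSt g d (.node (i, j) t0 t1) st z
            = runSt g d (cond b t1 t0) st₁ z := by
          show (if (st i).fin = true ∨ j ∈ (st i).S then _ else _) = _
          rw [if_neg hc1]
          show (if (st i).S.card + 1 < d then _ else _) = _
          rw [if_pos hc2, runSt_cond]
        have IH' : Concl g f d (cond b t1 t0) (sim g d (cond b t1 t0) st₁) st₁
            (runSt g d (cond b t1 t0) st₁ z) z := by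
          cases hbv : b
          · exact ih0 st₁ hInv₁
          · exact ih1 st₁ hInv₁
        rw [hrun, hsim]
        refine silent_step g f ?_ ?_ ?_ ?_ ?_ IH'
        · rw [hst₁]; simp
        · right; rw [hst₁]; simp
        · intro i'
          by_cases hii : i' = i
          · subst hii
            rw [hst₁, Function.update_self]
            refine ⟨Finset.subset_insert _ _, fun j' hj' => ?_, fun h => ?_⟩
            · show Function.update (st i').sg j b j' = (st i').sg j'
              have : j' ≠ j := fun h => hjS (h ▸ hj')
              rw [Function.update_of_ne this]
            · rw [hfinF] at h; simp at h
          · rw [hst₁, Function.update_of_ne hii]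
            exact ⟨Finset.Subset.refl _, fun _ _ => rfl, fun _ => rfl⟩
        · intro i'
          by_cases hii : i' = i
          · subst hii
            rw [hst₁, Function.update_self, hfinF]
          · rw [hst₁, Function.update_of_ne hii]
        · rw [hst₁, Qset_update]
      · -- trigger: query the block value
        have hcd : (st i).S.card + 1 = d := by omega
        have hVpos : 0 < V g (m - (st i).S.card) (st i).S (st i).sg := by omega
        have hw := not_witness_of_V_pos g hVpos
        set y := pickC g (st i).S (st i).sg (z i) with hy
        set st₁ := Function.update st i (⟨insert j (st i).S, y, true⟩ : BSt m) with hst₁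
        have hgy : g y = z i := pickC_val g (exists_completion g hw (z i))
        have hInv₁ : SInv g d z st₁ := by
          intro i'
          by_cases hii : i' = i
          · subst hii
            rw [hst₁, Function.update_self]
            refine ⟨fun _ => ⟨hgy, ?_⟩, fun h => by simp at h⟩
            show d ≤ (insert j (st i').S).card
            rw [Finset.card_insert_of_notMem hjS]
            omega
          · rw [hst₁, Function.update_of_ne hii]
            exact hInv i'
        have hrun : runSt g d (.node (i, j) t0 t1) st z
            = runSt g d (cond (y j) t1 t0) st₁ z := by
          show (if (st i).fin = true ∨ j ∈ (st i).S then _ else _) = _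
          rw [if_neg hc1]
          show (if (st i).S.card + 1 < d then _ else _) = _
          rw [if_neg hc2, runSt_cond]
        have IH' : Concl g f d (cond (y j) t1 t0) (sim g d (cond (y j) t1 t0) st₁) st₁
            (runSt g d (cond (y j) t1 t0) st₁ z) z := by
          cases hyj : y j
          · exact ih0 st₁ hInv₁
          · exact ih1 st₁ hInv₁
        obtain ⟨hE', hInv', hQ', hcnt', hfinsub', hwit'⟩ := IH'
        set st' := runSt g d (cond (y j) t1 t0) st₁ z with hst'
        set x := xOf g st' z with hx0
        have hE1 : SExt st st₁ := by
          intro i'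
          by_cases hii : i' = i
          · subst hii
            rw [hst₁, Function.update_self]
            refine ⟨Finset.subset_insert _ _, fun j' hj' => ?_, fun h => ?_⟩
            · show y j' = (st i').sg j'
              rw [hy]
              exact pickC_agree g _ _ _ j' hj'
            · rw [hfinF] at h; simp at h
          · rw [hst₁, Function.update_of_ne hii]
            exact ⟨Finset.Subset.refl _, fun _ _ => rfl, fun _ => rfl⟩
        have hsgj : (st₁ i).sg j = y j := by rw [hst₁]; simp
        have hj1 : j ∈ (st₁ i).S := by rw [hst₁]; simp
        have hxij : x ((i, j) : Fin n × Fin m) = y j := by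
          have hj' : j ∈ (st' i).S := (hE' i).1 hj1
          rw [hx0, xOf_mem g (p := ((i, j) : Fin n × Fin m)) hj']
          show (st' i).sg j = y j
          rw [(hE' i).2.1 j hj1, hsgj]
        have hpath : (DTree.node (i, j) t0 t1).path x
            = insert (i, j) ((cond (y j) t1 t0).path x) := by
          cases hb : y j
          · rw [hb] at hxij; simp [DTree.path, hxij, hb]
          · rw [hb] at hxij; simp [DTree.path, hxij, hb]
        have hsimpath : (sim g d (.node (i, j) t0 t1) st).path z
            = insert i ((sim g d (cond (y j) t1 t0) st₁).path z) := by
          have hnode : sim g d (.node (i, j) t0 t1) st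
              = DTree.node i
                (cond (pickC g (st i).S (st i).sg false j)
                  (sim g d t1 (Function.update st i
                    (⟨insert j (st i).S, pickC g (st i).S (st i).sg false, true⟩ : BSt m)))
                  (sim g d t0 (Function.update st i
                    (⟨insert j (st i).S, pickC g (st i).S (st i).sg false, true⟩ : BSt m))))
                (cond (pickC g (st i).S (st i).sg true j)
                  (sim g d t1 (Function.update st i
                    (⟨insert j (st i).S, pickC g (st i).S (st i).sg true, true⟩ : BSt m)))
                  (sim g d t0 (Function.update st i
                    (⟨insert j (st i).S, pickC g (st i).S (st i).sg true, true⟩ : BSt m)))) := by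
            show (if (st i).fin = true ∨ j ∈ (st i).S then _ else _) = _
            rw [if_neg hc1]
            show (if (st i).S.card + 1 < d then _ else _) = _
            rw [if_neg hc2]
          rw [hnode, hst₁, hy]
          show insert i (if z i = true then _ else _) = _
          cases hzi : z i
          · rw [if_neg (by simp), sim_cond]
          · rw [if_pos rfl, sim_cond]
        rw [hrun]
        refine ⟨SExt_trans hE1 hE', hInv', ?_, ?_, ?_, ?_⟩
        · rw [hpath]
          intro q hq
          have hQ1 : Qset st₁ = insert ((i, j) : Fin n × Fin m) (Qset st) := by
            rw [hst₁]; exact Qset_update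
          rcases Finset.mem_union.mp (hQ' hq) with h1 | h2
          · rcases Finset.mem_insert.mp (hQ1 ▸ h1) with rfl | h
            · exact Finset.mem_union_right _ (Finset.mem_insert_self _ _)
            · exact Finset.mem_union_left _ h
          · exact Finset.mem_union_right _ (Finset.mem_insert_of_mem h2)
        · rw [hsimpath]
          have hfS1 : finS st₁ = insert i (finS st) := by
            rw [hst₁]; exact finS_update_true rfl
          have hiF : i ∉ finS st := by rw [mem_finS, hfinF]; simp
          have h1 := Finset.card_insert_le i ((sim g d (cond (y j) t1 t0) st₁).path z)
          have h2 : (finS st₁).card = (finS st).card + 1 := by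
            rw [hfS1, Finset.card_insert_of_notMem hiF]
          omega
        · rw [hsimpath]
          have hfS1 : finS st₁ = insert i (finS st) := by
            rw [hst₁]; exact finS_update_true rfl
          intro q hq
          rcases Finset.mem_union.mp (hfinsub' hq) with h1 | h2
          · rcases Finset.mem_insert.mp (hfS1 ▸ h1) with rfl | h
            · exact Finset.mem_union_right _ (Finset.mem_insert_self _ _)
            · exact Finset.mem_union_left _ h
          · exact Finset.mem_union_right _ (Finset.mem_insert_of_mem h2)
        · intro W hW hwit z' hz1 hz2
          rw [hsimpath] at hz1
          refine hwit' (insert (i, j) W) ?_ ?_ z'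
            (fun i' hi' => hz1 i' (Finset.mem_insert_of_mem hi')) ?_
          · intro q hq
            rcases Finset.mem_insert.mp hq with rfl | hq
            · right; exact hj1
            · rcases hW q hq with hf | hS
              · by_cases hqi : q.1 = i
                · rw [hqi, hfinF] at hf; simp at hf
                · left; rw [hst₁, Function.update_of_ne hqi]; exact hf
              · by_cases hqi : q.1 = i
                · right
                  rw [hst₁, hqi, Function.update_self]
                  rw [hqi] at hS
                  exact Finset.mem_insert_of_mem hS
                · right; rw [hst₁, Function.update_of_ne hqi]; exact hS
          · have hsh : insert ((i, j) : Fin n × Fin m) W ∪ (cond (y j) t1 t0).path x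
                = W ∪ insert (i, j) ((cond (y j) t1 t0).path x) := by
              rw [Finset.insert_union, Finset.union_insert]
            rw [hsh, ← hpath]
            exact hwit
          · intro i' hf1
            by_cases hii : i' = i
            · subst hii
              exact hz1 i' (Finset.mem_insert_self _ _)
            · rw [hst₁, Function.update_of_ne hii] at hf1
              exact hz2 i' hf1


lemma detAlg_comp_ge (f : (Fin n → Bool) → Bool) :
    detAlg f * detAlg g ≤ detAlg (bcomp f g) := by
  rcases Nat.eq_zero_or_pos (detAlg g) with hd | hd
  · simp [hd]
  · set d := detAlg g with hd0
    have hdm : d ≤ m := by simpa using detAlg_le_card g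
    obtain ⟨T, hT, hk⟩ := detAlg_exists (bcomp f g)
    set k := detAlg (bcomp f g) with hk0
    set st₀ : Fin n → BSt m := fun _ => ⟨∅, fun _ => false, false⟩ with hst₀
    have hInv₀ : ∀ z : Fin n → Bool, SInv g d z st₀ := by
      intro z i
      refine ⟨fun h => by simp [hst₀] at h, fun _ => ⟨?_, ?_⟩⟩
      · show (∅ : Finset (Fin m)).card < d
        simpa using hd
      · show d - (∅ : Finset (Fin m)).card
            ≤ V g (m - (∅ : Finset (Fin m)).card) ∅ (fun _ => false)
        simp only [Finset.card_empty, Nat.sub_zero]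
        exact detAlg_le_V g _ m (by simp)
    have hdet : (sim g d T st₀).Determines f := by
      intro z z' hagree
      obtain ⟨hE', hInv', hQ', hcnt', hfinsub', hwit'⟩ :=
        main_sim g f hd hdm z T st₀ (hInv₀ z)
      have h1 : bcomp f g (xOf g (runSt g d T st₀ z) z') = f z := by
        refine hwit' ∅ (by simp) ?_ z' hagree (fun i h => by simp [hst₀] at h)
        have := hT (xOf g (runSt g d T st₀ z) z)
        rw [Finset.empty_union]
        exact this
      have h2 : bcomp f g (xOf g (runSt g d T st₀ z) z') = f z' := by
        refine bcomp_xOf g hInv' hd f z' ?_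
        intro i hfin
        rcases Finset.mem_union.mp (hfinsub' (mem_finS.mpr hfin)) with h | h
        · rw [mem_finS] at h; simp [hst₀] at h
        · exact hagree i h
      rw [← h2, h1]
    have hbound : ∀ z, ((sim g d T st₀).path z).card ≤ k / d := by
      intro z
      obtain ⟨hE', hInv', hQ', hcnt', hfinsub', hwit'⟩ :=
        main_sim g f hd hdm z T st₀ (hInv₀ z)
      set stf := runSt g d T st₀ z with hstf
      have hQ0 : Qset st₀ = ∅ := by
        ext p
        rw [mem_Qset]
        simp [hst₀]
      have hQsub : Qset stf ⊆ T.path (xOf g stf z) := by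
        rw [hQ0, Finset.empty_union] at hQ'
        exact hQ'
      have hQcard : (Qset stf).card ≤ k := le_trans (Finset.card_le_card hQsub) (hk _)
      have hdf : d * (finS stf).card ≤ (Qset stf).card := by
        rw [Qset_card]
        calc d * (finS stf).card = ∑ _i ∈ finS stf, d := by
              rw [Finset.sum_const, smul_eq_mul, mul_comm]
          _ ≤ ∑ i ∈ finS stf, (stf i).S.card :=
              Finset.sum_le_sum fun i hi => ((hInv' i).1 (mem_finS.mp hi)).2
          _ ≤ ∑ i, (stf i).S.card :=
              Finset.sum_le_sum_of_subset (Finset.subset_univ _)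
      have hfin0 : (finS st₀).card = 0 := by
        simp [finS, hst₀]
      have hmul : ((sim g d T st₀).path z).card * d ≤ k := by
        have h3 : ((sim g d T st₀).path z).card ≤ (finS stf).card := by omega
        calc ((sim g d T st₀).path z).card * d ≤ (finS stf).card * d :=
              Nat.mul_le_mul_right _ h3
          _ = d * (finS stf).card := mul_comm _ _
          _ ≤ k := le_trans hdf hQcard
      exact (Nat.le_div_iff_mul_le hd).mpr hmul
    have hf : detAlg f ≤ k / d := detAlg_le _ hdet hbound
    calc detAlg f * d ≤ (k / d) * d := Nat.mul_le_mul_right _ hf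
      _ ≤ k := Nat.div_mul_le_self k d

end Lower

/-- the deterministic algorithmic complexity is multiplicative under
composition: `a_D(f ∘ g) = a_D(f) · a_D(g)`. -/
theorem detAlg_comp (n m : ℕ) (f : (Fin n → Bool) → Bool) (g : (Fin m → Bool) → Bool) :
    detAlg (bcomp f g) = detAlg f * detAlg g :=
  le_antisymm (detAlg_comp_le g f) (detAlg_comp_ge g f)
end
end

section
/- For all Boolean functions f on n bits, g on m bits, and p ∈ [0,1], letting g(p) = P_{x∼π_p}[g(x)=1], the distributional sensitivity is multiplicative under composition: s(f∘g, π_p) = s(f, π_{g(p)}) · s(g, π_p). -/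
open Classical

noncomputable section

/-- `P_{x ∼ π_p}[g(x) = 1]`. -/
def probOne {ι : Type*} [Fintype ι] [DecidableEq ι] (g : (ι → Bool) → Bool) (p : ℝ) : ℝ :=
  ∑ x, wt p x * (if g x then 1 else 0)

/-- real indicator that coordinate `i` is sensitive for `f` at `b` -/
def Indf {ι : Type*} [DecidableEq ι] (f : (ι → Bool) → Bool) (b : ι → Bool) (i : ι) : ℝ :=
  if f (flipOn b {i}) ≠ f b then 1 else 0

lemma flipOn_single_apply {ι : Type*} [DecidableEq ι] (x : ι → Bool) (i j : ι) :
    flipOn x {i} j = if j = i then !(x j) else x j := by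
  simp [flipOn]

lemma flipOn_flipOn {ι : Type*} [DecidableEq ι] (x : ι → Bool) (i : ι) :
    flipOn (flipOn x {i}) {i} = x := by
  funext j; simp [flipOn]; split <;> simp

lemma flip_involutive {ι : Type*} [DecidableEq ι] (i : ι) :
    Function.Involutive (fun b : ι → Bool => flipOn b {i}) :=
  fun b => flipOn_flipOn b i

lemma Indf_flip {ι : Type*} [DecidableEq ι] (f : (ι → Bool) → Bool) (b : ι → Bool) (i : ι) :
    Indf f (flipOn b {i}) i = Indf f b i := by
  unfold Indf
  rw [flipOn_flipOn]
  by_cases h : f (flipOn b {i}) = f b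
  · simp [h]
  · rw [if_pos (fun he => h he.symm : f b ≠ f (flipOn b {i})), if_pos h]

lemma sensAt_cast {ι : Type*} [Fintype ι] [DecidableEq ι] (f : (ι → Bool) → Bool)
    (x : ι → Bool) : (sensAt f x : ℝ) = ∑ i, Indf f x i := by
  unfold sensAt Indf
  rw [Finset.card_filter]
  push_cast
  apply Finset.sum_congr rfl
  intro i _
  split <;> simp

lemma sum_wt {ι : Type*} [Fintype ι] [DecidableEq ι] (p : ℝ) :
    ∑ x : ι → Bool, wt p x = 1 := by
  unfold wt
  rw [← Fintype.piFinset_univ,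
    ← Finset.prod_univ_sum (fun _ : ι => (Finset.univ : Finset Bool))
      (fun _ j => if j = true then p else 1 - p)]
  simp

/-- pairing lemma -/
lemma pairing {ι : Type*} [Fintype ι] [DecidableEq ι] (i : ι)
    (F P : (ι → Bool) → ℝ) (u : Bool → ℝ)
    (hF : ∀ b, F (flipOn b {i}) = F b) (hP : ∀ b, P (flipOn b {i}) = P b) :
    ∑ b, F b * u (b i) * P b = (u true + u false) / 2 * ∑ b, F b * P b := by
  have h := Equiv.sum_comp ((flip_involutive (ι := ι) i).toPerm)
    (fun b => F b * u (b i) * P b)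
  simp only [Function.Involutive.coe_toPerm] at h
  have h2 : (2:ℝ) * ∑ b, F b * u (b i) * P b
      = ∑ b : ι → Bool, F b * (u true + u false) * P b := by
    rw [two_mul]
    nth_rewrite 1 [← h]
    rw [← Finset.sum_add_distrib]
    apply Finset.sum_congr rfl
    intro b _
    rw [hF, hP]
    have : flipOn b {i} i = !(b i) := by simp [flipOn]
    rw [this]
    cases hb : b i <;> simp <;> ring
  have h3 : ∑ b : ι → Bool, F b * (u true + u false) * P b
      = (u true + u false) * ∑ b, F b * P b := by
    rw [Finset.mul_sum]; apply Finset.sum_congr rfl; intro b _; ring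
  rw [h3] at h2
  linarith

lemma fiber {ι κ : Type*} [Fintype ι] [DecidableEq ι] [Fintype κ] [DecidableEq κ]
    (p : ℝ) (g : (κ → Bool) → Bool) (s : (κ → Bool) → ℝ) (i : ι) (F : (ι → Bool) → ℝ) :
    ∑ y : ι → (κ → Bool), (∏ k, wt p (y k)) * (F (fun k => g (y k)) * s (y i))
    = ∑ b : ι → Bool, F b *
        ∏ k, (if k = i then ∑ a ∈ Finset.univ.filter fun a => g a = b k, wt p a * s a
               else ∑ a ∈ Finset.univ.filter fun a => g a = b k, wt p a) := by
  rw [← Finset.sum_fiberwise Finset.univ (fun y : ι → κ → Bool => (fun k => g (y k)))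
        (fun y => (∏ k, wt p (y k)) * (F (fun k => g (y k)) * s (y i)))]
  apply Finset.sum_congr rfl
  intro b _
  have hfib : Finset.univ.filter (fun y : ι → κ → Bool => (fun k => g (y k)) = b)
      = Fintype.piFinset (fun k => Finset.univ.filter fun a => g a = b k) := by
    ext y; simp [Fintype.mem_piFinset, funext_iff]
  have hprod : (∏ k, (if k = i then ∑ a ∈ Finset.univ.filter fun a => g a = b k, wt p a * s a
               else ∑ a ∈ Finset.univ.filter fun a => g a = b k, wt p a))
      = ∏ k, ∑ a ∈ Finset.univ.filter (fun a => g a = b k), (wt p a * (if k = i then s a else 1)) := by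
    apply Finset.prod_congr rfl
    intro k _
    by_cases hk : k = i
    · simp only [if_pos hk]
    · simp only [if_neg hk, mul_one]
  rw [hprod, Finset.prod_univ_sum, hfib, Finset.mul_sum]
  apply Finset.sum_congr rfl
  intro y hy
  rw [Fintype.mem_piFinset] at hy
  have hgy : (fun k => g (y k)) = b := by
    funext k
    have := hy k
    simpa using this
  rw [hgy]
  rw [Finset.prod_mul_distrib, Finset.prod_ite_eq' Finset.univ i (fun k => s (y k))]
  simp only [Finset.mem_univ, if_pos]
  ring

lemma sensAt_bcomp {n m : ℕ} (f : (Fin n → Bool) → Bool) (g : (Fin m → Bool) → Bool)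
    (y : Fin n → Fin m → Bool) :
    (sensAt (bcomp f g) (fun pr => y pr.1 pr.2) : ℝ)
      = ∑ i, Indf f (fun k => g (y k)) i * (sensAt g (y i) : ℝ) := by
  rw [sensAt_cast, Fintype.sum_prod_type]
  apply Finset.sum_congr rfl
  intro i _
  rw [sensAt_cast, Finset.mul_sum]
  apply Finset.sum_congr rfl
  intro j _
  set x : Fin n × Fin m → Bool := fun pr => y pr.1 pr.2 with hx
  set G : Fin n → Bool := fun k => g (y k) with hGdef
  have hcomp : (fun k => g fun j' => flipOn x {(i,j)} (k, j'))
      = Function.update G i (g (flipOn (y i) {j})) := by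
    funext k
    by_cases hk : k = i
    · subst hk
      rw [Function.update_self]
      congr 1
      funext j'
      simp [flipOn, hx, Prod.ext_iff]
    · rw [Function.update_of_ne hk]
      have h2 : (fun j' => flipOn x {(i,j)} (k, j')) = y k := by
        funext j'
        simp [flipOn, hx, Prod.ext_iff, hk]
      rw [h2, hGdef]
  have hL : Indf (bcomp f g) x (i, j)
      = if f (Function.update G i (g (flipOn (y i) {j}))) ≠ f G then (1:ℝ) else 0 := by
    unfold Indf bcomp
    rw [hcomp]
  rw [hL]
  by_cases hgj : g (flipOn (y i) {j}) = G i
  · rw [hgj, Function.update_eq_self]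
    have h1 : Indf g (y i) j = 0 := by
      simp only [Indf, ne_eq, ite_not]
      rw [if_pos]
      exact hgj
    rw [h1]
    simp
  · have hnot : g (flipOn (y i) {j}) = !(G i) := by
      cases h1 : g (flipOn (y i) {j}) <;> cases h2 : G i <;> simp_all
    have hupd : Function.update G i (g (flipOn (y i) {j})) = flipOn G {i} := by
      funext k
      by_cases hk : k = i
      · subst hk; simp [Function.update_self, flipOn, hnot]
      · simp [Function.update_of_ne hk, flipOn, hk]
    rw [hupd]
    have h1 : Indf g (y i) j = 1 := by
      simp only [Indf, ne_eq, ite_not]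
      rw [if_neg]
      exact hgj
    rw [h1, mul_one]
    rfl

/-- distributional sensitivity is multiplicative under composition:
`s(f∘g, π_p) = s(f, π_{g(p)}) · s(g, π_p)`. -/
theorem distSens_comp (n m : ℕ) (f : (Fin n → Bool) → Bool) (g : (Fin m → Bool) → Bool)
    (p : ℝ) (hp0 : 0 ≤ p) (hp1 : p ≤ 1) :
    distSens (bcomp f g) p = distSens f (probOne g p) * distSens g p := by
  classical
  set q := probOne g p with hq
  set C : Bool → ℝ := fun β => ∑ a ∈ Finset.univ.filter fun a : Fin m → Bool => g a = β, wt p a with hC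
  set T : Bool → ℝ := fun β => ∑ a ∈ Finset.univ.filter fun a : Fin m → Bool => g a = β,
      wt p a * (sensAt g a : ℝ) with hT
  have hCtrue : C true = q := by
    simp only [hC, hq]
    unfold probOne
    rw [Finset.sum_filter]
    apply Finset.sum_congr rfl
    intro a _
    split <;> simp_all
  have hfilt : Finset.univ.filter (fun a : Fin m → Bool => g a = false)
      = Finset.univ.filter (fun a => ¬ (g a = true)) := by
    apply Finset.filter_congr
    intro a _
    simp
  have hCsum : C true + C false = 1 := by
    rw [hC]
    simp only [hfilt]
    rw [Finset.sum_filter_add_sum_filter_not]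
    exact sum_wt p
  have hTsum : T true + T false = distSens g p := by
    rw [hT]
    simp only [hfilt]
    rw [Finset.sum_filter_add_sum_filter_not]
    rfl
  have hCfalse : C false = 1 - q := by linarith [hCtrue, hCsum]
  have hwtq : ∀ b : Fin n → Bool, wt q b = ∏ k, C (b k) := by
    intro b
    unfold wt
    apply Finset.prod_congr rfl
    intro k _
    cases hb : b k
    · simp [hb, hCfalse]
    · simp [hb, hCtrue]
  -- step 1: rewrite LHS as a sum over curried configurations
  have step1 : distSens (bcomp f g) p
      = ∑ i : Fin n, ∑ y : Fin n → Fin m → Bool,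
          (∏ k, wt p (y k)) * (Indf f (fun k => g (y k)) i * (sensAt g (y i) : ℝ)) := by
    unfold distSens expec
    rw [← Equiv.sum_comp (Equiv.curry (Fin n) (Fin m) Bool).symm
         (fun x => wt p x * (sensAt (bcomp f g) x : ℝ))]
    rw [Finset.sum_comm]
    apply Finset.sum_congr rfl
    intro y _
    have hcur : ((Equiv.curry (Fin n) (Fin m) Bool).symm y)
        = (fun pr : Fin n × Fin m => y pr.1 pr.2) := rfl
    rw [hcur, sensAt_bcomp, Finset.mul_sum]
    have hw : wt p (fun pr : Fin n × Fin m => y pr.1 pr.2) = ∏ k, wt p (y k) := by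
      unfold wt
      exact Fintype.prod_prod_type _
    rw [hw]
  -- step 2: evaluate the inner sum for each i
  have step2 : ∀ i : Fin n,
      ∑ y : Fin n → Fin m → Bool,
          (∏ k, wt p (y k)) * (Indf f (fun k => g (y k)) i * (sensAt g (y i) : ℝ))
        = distSens g p * ∑ b : Fin n → Bool, wt q b * Indf f b i := by
    intro i
    rw [fiber p g (fun a => (sensAt g a : ℝ)) i (fun b => Indf f b i)]
    set P : (Fin n → Bool) → ℝ := fun b => ∏ k ∈ Finset.univ.erase i, C (b k) with hP
    have hPinv : ∀ b, P (flipOn b {i}) = P b := by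
      intro b
      rw [hP]
      apply Finset.prod_congr rfl
      intro k hk
      rw [flipOn_single_apply, if_neg (Finset.ne_of_mem_erase hk)]
    have hFinv : ∀ b, Indf f (flipOn b {i}) i = Indf f b i := fun b => Indf_flip f b i
    have hsplitT : ∀ b : Fin n → Bool,
        (∏ k, (if k = i then T (b k) else C (b k))) = T (b i) * P b := by
      intro b
      rw [← Finset.mul_prod_erase Finset.univ _ (Finset.mem_univ i), if_pos rfl, hP]
      congr 1
      apply Finset.prod_congr rfl
      intro k hk
      rw [if_neg (Finset.ne_of_mem_erase hk)]
    have hsplitC : ∀ b : Fin n → Bool, wt q b = C (b i) * P b := by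
      intro b
      rw [hwtq b, ← Finset.mul_prod_erase Finset.univ _ (Finset.mem_univ i), hP]
    have hA : ∑ b : Fin n → Bool, Indf f b i *
        (∏ k, (if k = i then T (b k) else C (b k)))
        = (T true + T false) / 2 * ∑ b : Fin n → Bool, Indf f b i * P b := by
      rw [← pairing i (fun b => Indf f b i) P T hFinv hPinv]
      apply Finset.sum_congr rfl
      intro b _
      rw [hsplitT b]
      ring
    have hB : ∑ b : Fin n → Bool, wt q b * Indf f b i
        = (C true + C false) / 2 * ∑ b : Fin n → Bool, Indf f b i * P b := by
      rw [← pairing i (fun b => Indf f b i) P C hFinv hPinv]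
      apply Finset.sum_congr rfl
      intro b _
      rw [hsplitC b]
      ring
    rw [hCsum] at hB
    rw [hTsum] at hA
    have : ∑ b : Fin n → Bool, Indf f b i *
        (∏ k, (if k = i then T (b k) else C (b k))) = distSens g p * ((1:ℝ)/2 * ∑ b : Fin n → Bool, Indf f b i * P b) := by
      rw [hA]; ring
    rw [this, ← hB]
  rw [step1]
  have : ∑ i : Fin n, distSens g p * ∑ b : Fin n → Bool, wt q b * Indf f b i
      = distSens g p * ∑ b : Fin n → Bool, wt q b * (sensAt f b : ℝ) := by
    rw [← Finset.mul_sum, Finset.sum_comm]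
    congr 1
    apply Finset.sum_congr rfl
    intro b _
    rw [sensAt_cast, Finset.mul_sum]
  rw [Finset.sum_congr rfl (fun i _ => step2 i), this]
  have hRHS : distSens f q = ∑ b : Fin n → Bool, wt q b * (sensAt f b : ℝ) := rfl
  rw [hRHS]
  ring
end
end

section
/- For every percolation function f (the indicator of the event {A ↔ B} that two vertex sets A and B are connected by open edges in a finite multigraph G = (V,E) with |E| = n, as a function of the edge configuration ω ∈ {0,1}^E), the pointwise witness complexity equals the pointwise block sensitivity: w_f(ω) = b_f(ω) for every ω ∈ {0,1}^n. In particular, w(f,π_p) = b(f,π_p) for every p ∈ [0,1]. -/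
/-!
Block sensitivity never exceeds witness complexity: each sensitive block must meet every
witness set. For the converse, let `O` be the set of open edges of `ω`.

If `ω` connects `A` to `B`, a shortest open path of length `L` is a witness, while the open
edges leaving the balls of radius `0, …, L - 1` around `A` form `L` disjoint blocks, each of
which disconnects `A` from `B` when closed.

If `ω` does not connect `A` to `B`, contract the open clusters. A set of closed edges that is
smaller than a minimal witness cannot separate `A` from `B` in the contracted multigraph, so
by the edge version of Menger's theorem there are `witAt f ω` edge-disjoint sets of closed
edges each of which connects `A` to `B` when opened. Menger's theorem is proved with unit
flows: augmenting paths raise the value of a flow up to the minimum cut, and a flow of value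
`k` decomposes into `k` edge-disjoint paths.
-/

open Classical

noncomputable section

open Finset Relation Function
open scoped symmDiff

section BooleanFunction

variable {ι : Type*} {f : (ι → Bool) → Bool} {x : ι → Bool}

lemma witAt_le_card {W : Finset ι} (hW : IsWitness f x W) : witAt f x ≤ W.card :=
  Nat.sInf_le ⟨W, rfl, hW⟩

lemma isWitness_univ [Fintype ι] : IsWitness f x univ := fun y hy => by
  rw [show y = x from funext fun i => hy i (mem_univ i)]

lemma setOf_flipOn [DecidableEq ι] (B : Finset ι) :
    {i | flipOn x B i = true} = {i | x i = true} ∆ ↑B := by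
  ext i
  by_cases hi : i ∈ B <;> cases x i <;> simp [flipOn, Set.mem_symmDiff, hi]

lemma IsWitness.inter_nonempty [DecidableEq ι] {W B : Finset ι} (hW : IsWitness f x W)
    (hB : f (flipOn x B) ≠ f x) : (B ∩ W).Nonempty := by
  by_contra h
  refine hB (hW _ fun i hi => ?_)
  have hiB : i ∉ B := fun hiB => h ⟨i, mem_inter.2 ⟨hiB, hi⟩⟩
  simp [flipOn, hiB]

lemma IsWitness.le_card [DecidableEq ι] {W : Finset ι} (hW : IsWitness f x W) {m : ℕ}
    {B : Fin m → Finset ι} (hB : ∀ j, f (flipOn x (B j)) ≠ f x)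
    (hdisj : Pairwise (Disjoint on B)) : m ≤ W.card :=
  calc m = ∑ _j : Fin m, 1 := by simp
    _ ≤ ∑ j, (B j ∩ W).card := sum_le_sum fun j _ => (hW.inter_nonempty (hB j)).card_pos
    _ = (univ.biUnion fun j => B j ∩ W).card :=
      (card_biUnion fun i _ j _ hij => (hdisj hij).mono inter_subset_left inter_subset_left).symm
    _ ≤ W.card := card_le_card (biUnion_subset.2 fun _ _ => inter_subset_right)

lemma le_bsAt [Fintype ι] [DecidableEq ι] {m : ℕ} {B : Fin m → Finset ι}
    (hB : ∀ j, f (flipOn x (B j)) ≠ f x) (hdisj : Pairwise (Disjoint on B)) :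
    m ≤ bsAt f x :=
  le_csSup ⟨Fintype.card ι, fun _ ⟨_, hB', hd'⟩ => isWitness_univ.le_card hB' hd'⟩
    ⟨B, hB, fun _ _ h => hdisj h⟩

lemma bsAt_le_witAt [Fintype ι] [DecidableEq ι] (f : (ι → Bool) → Bool) (x : ι → Bool) :
    bsAt f x ≤ witAt f x := by
  obtain ⟨W, hcard, hW⟩ : witAt f x ∈ {k | ∃ W : Finset ι, W.card = k ∧ IsWitness f x W} :=
    Nat.sInf_mem ⟨_, univ, rfl, isWitness_univ⟩
  refine csSup_le ⟨0, Fin.elim0, fun j => j.elim0, fun j => j.elim0⟩ ?_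
  rintro m ⟨B, hB, hdisj⟩
  exact hcard ▸ hW.le_card hB fun _ _ h => hdisj _ _ h

end BooleanFunction

section Graph

variable {ι V : Type*} (ends : ι → V × V)

def EdgeAdj (T : Set ι) (u v : V) : Prop :=
  ∃ e ∈ T, ends e = (u, v) ∨ ends e = (v, u)

def Joins (T : Set ι) (A B : Set V) : Prop :=
  ∃ a ∈ A, ∃ b ∈ B, ReflTransGen (EdgeAdj ends T) a b

def edgeBoundary [Fintype ι] (Z : Set V) : Finset ι :=
  univ.filter fun e => ¬((ends e).1 ∈ Z ↔ (ends e).2 ∈ Z)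

def contract (O : Set ι) (e : ι) : Quot (EdgeAdj ends O) × Quot (EdgeAdj ends O) :=
  (Quot.mk _ (ends e).1, Quot.mk _ (ends e).2)

variable {ends} {T T' : Set ι} {A B Z : Set V}

instance : Std.Symm (EdgeAdj ends T) := ⟨fun _ _ ⟨e, he, h⟩ => ⟨e, he, h.symm⟩⟩

lemma EdgeAdj.mono (hT : T ⊆ T') {u v : V} (h : EdgeAdj ends T u v) : EdgeAdj ends T' u v :=
  let ⟨e, he, h⟩ := h; ⟨e, hT he, h⟩

lemma Joins.mono (h : Joins ends T A B) (hT : T ⊆ T') : Joins ends T' A B :=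
  let ⟨a, ha, b, hb, h⟩ := h; ⟨a, ha, b, hb, ReflTransGen.mono (fun _ _ => EdgeAdj.mono hT) _ _ h⟩

lemma not_joins_of_edgeBoundary [Fintype ι] (hA : A ⊆ Z) (hB : Disjoint Z B)
    (hT : ∀ e ∈ T, e ∉ edgeBoundary ends Z) : ¬ Joins ends T A B := by
  rintro ⟨a, ha, b, hb, h⟩
  refine Set.disjoint_left.1 hB ?_ hb
  clear hb
  induction h with
  | refl => exact hA ha
  | tail _ hstep ih =>
    obtain ⟨e, he, hends⟩ := hstep
    have hcross := hT e he
    simp only [edgeBoundary, mem_filter, mem_univ, true_and, not_not] at hcross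
    rcases hends with hends | hends <;> simp only [hends] at hcross
    exacts [hcross.1 ih, hcross.2 ih]

lemma reflTransGen_of_mk_eq {O : Set ι} {x y : V}
    (h : Quot.mk (EdgeAdj ends O) x = Quot.mk _ y) :
    ReflTransGen (EdgeAdj ends (O ∪ T)) x y :=
  ReflTransGen.mono (fun _ _ => EdgeAdj.mono Set.subset_union_left) _ _
    (EqvGen.eqvGen_eq_reflTransGen (r := EdgeAdj ends O) ▸ Quot.eqvGen_exact h)

lemma joins_contract_iff {O : Set ι} :
    Joins (contract ends O) T (Quot.mk _ '' A) (Quot.mk _ '' B) ↔ Joins ends (O ∪ T) A B := by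
  constructor
  · rintro ⟨_, ⟨a, ha, rfl⟩, _, ⟨b, hb, rfl⟩, h⟩
    suffices ∀ q, ReflTransGen (EdgeAdj (contract ends O) T) (Quot.mk _ a) q →
        ∃ x, Quot.mk _ x = q ∧ ReflTransGen (EdgeAdj ends (O ∪ T)) a x by
      obtain ⟨x, hx, hax⟩ := this _ h
      exact ⟨a, ha, b, hb, hax.trans (reflTransGen_of_mk_eq hx)⟩
    intro q hq
    induction hq with
    | refl => exact ⟨a, rfl, .refl⟩
    | tail _ hstep ih =>
      obtain ⟨x, rfl, hax⟩ := ih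
      obtain ⟨e, he, hends | hends⟩ := hstep <;>
        simp only [contract, Prod.mk.injEq] at hends <;> obtain ⟨h₁, h₂⟩ := hends
      · refine ⟨(ends e).2, h₂, (hax.trans (reflTransGen_of_mk_eq h₁.symm)).tail ?_⟩
        exact ⟨e, Or.inr he, .inl rfl⟩
      · refine ⟨(ends e).1, h₁, (hax.trans (reflTransGen_of_mk_eq h₂.symm)).tail ?_⟩
        exact ⟨e, Or.inr he, .inr rfl⟩
  · rintro ⟨a, ha, b, hb, h⟩
    refine ⟨_, ⟨a, ha, rfl⟩, _, ⟨b, hb, rfl⟩, ReflTransGen.lift' _ ?_ _ _ h⟩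
    rintro u v ⟨e, he | he, hends⟩ <;> change ReflTransGen _ (Quot.mk _ u) (Quot.mk _ v)
    · rw [Quot.sound ⟨e, he, hends⟩]
    · refine .single ⟨e, he, ?_⟩
      rcases hends with hends | hends <;> simp [contract, hends]

end Graph

section Flow

variable {ι V : Type*} (ends : ι → V × V)

def dartSrc (t : ι × Bool) : V := if t.2 then (ends t.1).1 else (ends t.1).2

def dartTgt (t : ι × Bool) : V := if t.2 then (ends t.1).2 else (ends t.1).1

def signOf (d : Bool) : ℤ := if d then 1 else -1

def dartVec (t : ι × Bool) : ι → ℤ := Pi.single t.1 (signOf t.2)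

def incidence (X : Set V) (e : ι) : ℤ := X.indicator 1 (ends e).2 - X.indicator 1 (ends e).1

def netFlowInto [Fintype ι] (g : ι → ℤ) (X : Set V) : ℤ := g ⬝ᵥ incidence ends X

/-- Conservation is required on every vertex set avoiding the terminals; for a finite graph
this is equivalent to conservation at each vertex outside `A ∪ B`. -/
def IsUnitFlow [Fintype ι] (A B : Set V) (g : ι → ℤ) : Prop :=
  (∀ e, |g e| ≤ 1) ∧ ∀ X, Disjoint X A → Disjoint X B → netFlowInto ends g X = 0

def residualDarts (g : ι → ℤ) : Set (ι × Bool) := {t | signOf t.2 * g t.1 < 1}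

def supportDarts (g : ι → ℤ) : Set (ι × Bool) := {t | 0 < signOf t.2 * g t.1}

def IsUnitPath [Fintype ι] (D : Set (ι × Bool)) (g : ι → ℤ) (a b : V) : Prop :=
  (∀ e, g e ≠ 0 → ∃ d, (e, d) ∈ D ∧ g e = signOf d) ∧
  (∀ X, netFlowInto ends g X = X.indicator 1 b - X.indicator 1 a) ∧
  ReflTransGen (EdgeAdj ends {e | g e ≠ 0}) a b

def reachWithin (D : Set (ι × Bool)) (A : Set V) : ℕ → Set V
  | 0 => A
  | i + 1 => reachWithin D A i ∪
      {v | ∃ t ∈ D, dartSrc ends t ∈ reachWithin D A i ∧ dartTgt ends t = v}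

lemma reachWithin_mono (D : Set (ι × Bool)) (A : Set V) : Monotone (reachWithin ends D A) :=
  monotone_nat_of_le_succ fun _ => Set.subset_union_left

variable {ends}

lemma ends_dart (t : ι × Bool) :
    ends t.1 = (dartSrc ends t, dartTgt ends t) ∨ ends t.1 = (dartTgt ends t, dartSrc ends t) := by
  rcases t with ⟨e, _ | _⟩ <;> simp [dartSrc, dartTgt]

lemma edgeAdj_dart {T : Set ι} {t : ι × Bool} (ht : t.1 ∈ T) :
    EdgeAdj ends T (dartSrc ends t) (dartTgt ends t) :=
  ⟨t.1, ht, ends_dart t⟩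

lemma dartVec_apply_of_ne {t : ι × Bool} {e : ι} (he : e ≠ t.1) : dartVec t e = 0 :=
  Pi.single_eq_of_ne he _

lemma dartVec_apply_self (t : ι × Bool) : dartVec t t.1 = signOf t.2 :=
  Pi.single_eq_same _ _

lemma signOf_mul_incidence (X : Set V) (t : ι × Bool) :
    signOf t.2 * incidence ends X t.1 =
      X.indicator 1 (dartTgt ends t) - X.indicator 1 (dartSrc ends t) := by
  rcases t with ⟨e, _ | _⟩ <;> simp [signOf, incidence, dartSrc, dartTgt]

lemma dartTgt_mem_iUnion_reachWithin {D : Set (ι × Bool)} {A : Set V} {t : ι × Bool}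
    (ht : t ∈ D) (hsrc : dartSrc ends t ∈ ⋃ i, reachWithin ends D A i) :
    dartTgt ends t ∈ ⋃ i, reachWithin ends D A i := by
  obtain ⟨i, hi⟩ := Set.mem_iUnion.1 hsrc
  exact Set.mem_iUnion.2 ⟨i + 1, Or.inr ⟨t, ht, hi, rfl⟩⟩

section Finite

variable [Fintype ι]

lemma netFlowInto_add (g h : ι → ℤ) (X : Set V) :
    netFlowInto ends (g + h) X = netFlowInto ends g X + netFlowInto ends h X :=
  add_dotProduct _ _ _

lemma netFlowInto_sub (g h : ι → ℤ) (X : Set V) :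
    netFlowInto ends (g - h) X = netFlowInto ends g X - netFlowInto ends h X :=
  sub_dotProduct _ _ _

lemma netFlowInto_union (g : ι → ℤ) {X Y : Set V} (hXY : Disjoint X Y) :
    netFlowInto ends g (X ∪ Y) = netFlowInto ends g X + netFlowInto ends g Y := by
  have : incidence ends (X ∪ Y) = incidence ends X + incidence ends Y := by
    ext e
    simp only [incidence, Set.indicator_union_of_disjoint hXY, Pi.add_apply]
    ring
  rw [netFlowInto, this, dotProduct_add]
  rfl

lemma signOf_ne_zero (d : Bool) : signOf d ≠ 0 := by
  cases d <;> simp [signOf]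

lemma IsUnitPath.snoc {D : Set (ι × Bool)} {g : ι → ℤ} {a : V} {t : ι × Bool}
    (hg : IsUnitPath ends D g a (dartSrc ends t)) (ht : t ∈ D) (hgt : g t.1 = 0) :
    IsUnitPath ends D (g + dartVec t) a (dartTgt ends t) := by
  obtain ⟨hdarts, hnet, hconn⟩ := hg
  have hne : ∀ e, e ≠ t.1 → (g + dartVec t) e = g e := fun e he => by
    simp [dartVec_apply_of_ne he]
  have hat : (g + dartVec t) t.1 = signOf t.2 := by simp [hgt, dartVec_apply_self]
  refine ⟨fun e he => ?_, fun X => ?_, ?_⟩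
  · by_cases het : e = t.1
    · exact ⟨t.2, het ▸ ht, het ▸ hat⟩
    · rw [hne e het] at he ⊢
      exact hdarts e he
  · rw [netFlowInto_add, hnet, netFlowInto, dartVec, single_dotProduct, signOf_mul_incidence]
    ring
  · refine (ReflTransGen.mono (fun _ _ => EdgeAdj.mono fun e he => ?_) _ _ hconn).tail
      (edgeAdj_dart ?_)
    · have het : e ≠ t.1 := fun h => he (h ▸ hgt)
      show (g + dartVec t) e ≠ 0
      rwa [hne e het]
    · show (g + dartVec t) t.1 ≠ 0
      rw [hat]
      exact signOf_ne_zero t.2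

lemma card_filter_add_dartVec_ne_zero_le (g : ι → ℤ) (t : ι × Bool) :
    (univ.filter fun e => (g + dartVec t) e ≠ 0).card ≤
      (univ.filter fun e => g e ≠ 0).card + 1 := by
  refine (card_le_card fun e he => ?_).trans (card_insert_le t.1 _)
  by_cases het : e = t.1
  · exact het ▸ mem_insert_self _ _
  · simp_all [dartVec_apply_of_ne het]

lemma exists_isUnitPath_of_mem_reachWithin {D : Set (ι × Bool)} {A : Set V} :
    ∀ {i : ℕ} {v : V}, v ∈ reachWithin ends D A i → ∃ a ∈ A, ∃ g, IsUnitPath ends D g a v ∧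
      (∀ e, g e ≠ 0 → (ends e).1 ∈ reachWithin ends D A i ∧ (ends e).2 ∈ reachWithin ends D A i) ∧
      (univ.filter fun e => g e ≠ 0).card ≤ i
  | 0, v, hv => ⟨v, hv, 0, ⟨by simp, by simp [netFlowInto], .refl⟩, by simp, by simp⟩
  | i + 1, v, hv => by
    have hmono := reachWithin_mono ends D A i.le_succ
    by_cases hvi : v ∈ reachWithin ends D A i
    · obtain ⟨a, ha, g, hg, hsupp, hcard⟩ := exists_isUnitPath_of_mem_reachWithin hvi
      exact ⟨a, ha, g, hg, fun e he => (hsupp e he).imp (@hmono _) (@hmono _),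
        hcard.trans i.le_succ⟩
    obtain ⟨t, ht, hsrc, rfl⟩ := hv.resolve_left hvi
    obtain ⟨a, ha, g, hg, hsupp, hcard⟩ := exists_isUnitPath_of_mem_reachWithin hsrc
    have htgt : dartTgt ends t ∈ reachWithin ends D A (i + 1) := Or.inr ⟨t, ht, hsrc, rfl⟩
    -- the path to `dartSrc ends t` stays inside the ball, which `dartTgt ends t` lies outside of
    have hgt : g t.1 = 0 := by
      by_contra h
      have hboth := hsupp _ h
      rcases ends_dart (ends := ends) t with hends | hends <;> rw [hends] at hboth
      exacts [hvi hboth.2, hvi hboth.1]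
    have hends_mem : (ends t.1).1 ∈ reachWithin ends D A (i + 1) ∧
        (ends t.1).2 ∈ reachWithin ends D A (i + 1) := by
      rcases ends_dart (ends := ends) t with hends | hends <;> rw [hends]
      exacts [⟨hmono hsrc, htgt⟩, ⟨htgt, hmono hsrc⟩]
    refine ⟨a, ha, _, hg.snoc ht hgt, fun e he => ?_, ?_⟩
    · by_cases het : e = t.1
      · exact het ▸ hends_mem
      · rw [Pi.add_apply, dartVec_apply_of_ne het, add_zero] at he
        exact (hsupp e he).imp (@hmono _) (@hmono _)
    · exact (card_filter_add_dartVec_ne_zero_le g t).trans (by omega)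

lemma exists_isUnitPath_or_closed (D : Set (ι × Bool)) (A B : Set V) :
    (∃ a ∈ A, ∃ b ∈ B, ∃ g, IsUnitPath ends D g a b) ∨
      ∃ Z, A ⊆ Z ∧ Disjoint Z B ∧ ∀ t ∈ D, dartSrc ends t ∈ Z → dartTgt ends t ∈ Z := by
  by_cases h : ∃ i, ∃ b ∈ B, b ∈ reachWithin ends D A i
  · obtain ⟨i, b, hb, hbi⟩ := h
    obtain ⟨a, ha, g, hg, -⟩ := exists_isUnitPath_of_mem_reachWithin hbi
    exact Or.inl ⟨a, ha, b, hb, g, hg⟩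
  simp only [not_exists, not_and] at h
  refine Or.inr ⟨⋃ i, reachWithin ends D A i, fun a ha => Set.mem_iUnion.2 ⟨0, ha⟩,
    Set.disjoint_left.2 fun b hb hbB => ?_, fun t ht => dartTgt_mem_iUnion_reachWithin ht⟩
  obtain ⟨i, hi⟩ := Set.mem_iUnion.1 hb
  exact h i b hbB hi

end Finite

end Flow

section Menger

variable {ι V : Type*} [Fintype ι] {ends : ι → V × V} {A B Z : Set V} {f g : ι → ℤ}

lemma incidence_compl_eq_zero {e : ι} (he : e ∉ edgeBoundary ends Z) :
    incidence ends Zᶜ e = 0 := by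
  simp only [edgeBoundary, mem_filter, mem_univ, true_and, not_not] at he
  by_cases h : (ends e).1 ∈ Z <;> simp [incidence, h, he.1, mt he.2]

lemma exists_dart_of_mem_edgeBoundary {e : ι} (he : e ∈ edgeBoundary ends Z) :
    ∃ d, dartSrc ends (e, d) ∈ Z ∧ dartTgt ends (e, d) ∉ Z ∧ incidence ends Zᶜ e = signOf d := by
  simp only [edgeBoundary, mem_filter, mem_univ, true_and] at he
  by_cases h₁ : (ends e).1 ∈ Z
  · have h₂ : (ends e).2 ∉ Z := fun h₂ => he ⟨fun _ => h₂, fun _ => h₁⟩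
    exact ⟨true, by simpa [dartSrc], by simpa [dartTgt], by simp [incidence, signOf, h₁, h₂]⟩
  · have h₂ : (ends e).2 ∈ Z := by_contra fun h₂ => he ⟨fun h => absurd h h₁, fun h => absurd h h₂⟩
    exact ⟨false, by simpa [dartSrc], by simpa [dartTgt], by simp [incidence, signOf, h₁, h₂]⟩

/-- The edges leaving a set closed under residual darts are saturated outwards. -/
lemma netFlowInto_compl_eq_card (hcap : ∀ e, |g e| ≤ 1)
    (hZ : ∀ t ∈ residualDarts g, dartSrc ends t ∈ Z → dartTgt ends t ∈ Z) :
    netFlowInto ends g Zᶜ = (edgeBoundary ends Z).card := by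
  have hterm : ∀ e, g e * incidence ends Zᶜ e = if e ∈ edgeBoundary ends Z then 1 else 0 := by
    intro e
    split_ifs with he
    · obtain ⟨d, hsrc, htgt, hinc⟩ := exists_dart_of_mem_edgeBoundary he
      have hsat : ¬ signOf d * g e < 1 := fun h => htgt (hZ (e, d) h hsrc)
      have := abs_le.1 (hcap e)
      rw [hinc]
      cases d <;> simp only [signOf] at hsat ⊢ <;> simp at hsat ⊢ <;> omega
    · rw [incidence_compl_eq_zero he, mul_zero]
  simp [netFlowInto, dotProduct, hterm]

lemma netFlowInto_compl_nonpos
    (hZ : ∀ t ∈ supportDarts g, dartSrc ends t ∈ Z → dartTgt ends t ∈ Z) :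
    netFlowInto ends g Zᶜ ≤ 0 := by
  refine sum_nonpos fun e _ => ?_
  by_cases he : e ∈ edgeBoundary ends Z
  · obtain ⟨d, hsrc, htgt, hinc⟩ := exists_dart_of_mem_edgeBoundary he
    have hnonpos : ¬ 0 < signOf d * g e := fun h => htgt (hZ (e, d) h hsrc)
    rw [hinc, mul_comm]
    exact not_lt.1 hnonpos
  · rw [incidence_compl_eq_zero he, mul_zero]

lemma IsUnitFlow.netFlowInto_compl (hf : IsUnitFlow ends A B g) (hA : A ⊆ Z)
    (hB : Disjoint Z B) : netFlowInto ends g Zᶜ = netFlowInto ends g B := by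
  rw [← Set.union_sdiff_cancel hB.subset_compl_left, netFlowInto_union _ Set.disjoint_sdiff_right,
    hf.2 _ ((disjoint_compl_left.mono_right hA).mono_left Set.sdiff_subset)
      Set.disjoint_sdiff_left, add_zero]

lemma IsUnitPath.netFlowInto_eq_one {D : Set (ι × Bool)} {a b : V}
    (hg : IsUnitPath ends D g a b) (ha : a ∉ B) (hb : b ∈ B) : netFlowInto ends g B = 1 := by
  simp [hg.2.1, ha, hb]

lemma IsUnitFlow.add_isUnitPath {a b : V} (hf : IsUnitFlow ends A B f)
    (hg : IsUnitPath ends (residualDarts f) g a b) (ha : a ∈ A) (hb : b ∈ B) :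
    IsUnitFlow ends A B (f + g) := by
  refine ⟨fun e => ?_, fun X hXA hXB => ?_⟩
  · by_cases hge : g e = 0
    · simpa [hge] using hf.1 e
    obtain ⟨d, hd, hgd⟩ := hg.1 e hge
    have := abs_le.1 (hf.1 e)
    change signOf d * f e < 1 at hd
    rw [Pi.add_apply, hgd, abs_le]
    cases d <;> simp only [signOf] at hd ⊢ <;> simp at hd ⊢ <;> omega
  · rw [netFlowInto_add, hf.2 X hXA hXB, hg.2.1,
      Set.indicator_of_notMem (Set.disjoint_right.1 hXB hb),
      Set.indicator_of_notMem (Set.disjoint_right.1 hXA ha)]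
    simp

lemma IsUnitPath.apply_eq_of_supportDarts {a b : V}
    (hcap : ∀ e, |f e| ≤ 1) (hg : IsUnitPath ends (supportDarts f) g a b) {e : ι}
    (he : g e ≠ 0) : g e = f e := by
  obtain ⟨d, hd, hgd⟩ := hg.1 e he
  have := abs_le.1 (hcap e)
  change 0 < signOf d * f e at hd
  rw [hgd]
  cases d <;> simp only [signOf] at hd ⊢ <;> simp at hd ⊢ <;> omega

lemma IsUnitFlow.sub_isUnitPath {a b : V} (hf : IsUnitFlow ends A B f)
    (hg : IsUnitPath ends (supportDarts f) g a b) (ha : a ∈ A) (hb : b ∈ B) :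
    IsUnitFlow ends A B (f - g) := by
  refine ⟨fun e => ?_, fun X hXA hXB => ?_⟩
  · by_cases hge : g e = 0
    · simpa [hge] using hf.1 e
    simp [hg.apply_eq_of_supportDarts hf.1 hge]
  · rw [netFlowInto_sub, hf.2 X hXA hXB, hg.2.1,
      Set.indicator_of_notMem (Set.disjoint_right.1 hXB hb),
      Set.indicator_of_notMem (Set.disjoint_right.1 hXA ha)]
    simp

lemma exists_isUnitFlow {k : ℕ} (hAB : Disjoint A B)
    (hcut : ∀ C : Finset ι, C.card < k → Joins ends (↑C)ᶜ A B) :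
    ∀ m ≤ k, ∃ f, IsUnitFlow ends A B f ∧ netFlowInto ends f B = m
  | 0, _ => ⟨0, ⟨by simp, by simp [netFlowInto]⟩, by simp [netFlowInto]⟩
  | m + 1, hm => by
    obtain ⟨f, hf, hval⟩ := exists_isUnitFlow hAB hcut m (by omega)
    rcases exists_isUnitPath_or_closed (ends := ends) (residualDarts f) A B with
      ⟨a, ha, b, hb, g, hg⟩ | ⟨Z, hAZ, hZB, hZ⟩
    · refine ⟨f + g, hf.add_isUnitPath hg ha hb, ?_⟩
      rw [netFlowInto_add, hval, hg.netFlowInto_eq_one (Set.disjoint_left.1 hAB ha) hb]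
      push_cast
      rfl
    · have hcard : (edgeBoundary ends Z).card = m := by
        have := netFlowInto_compl_eq_card hf.1 hZ
        rw [hf.netFlowInto_compl hAZ hZB, hval] at this
        exact_mod_cast this.symm
      exact absurd (hcut _ (by omega)) (not_joins_of_edgeBoundary hAZ hZB fun e he => he)

lemma pairwise_disjoint_cons {α : Type*} {k : ℕ} {s : Finset α} {S : Fin k → Finset α}
    (hs : ∀ j, Disjoint s (S j)) (hS : Pairwise (Disjoint on S)) :
    Pairwise (Disjoint on (Fin.cons s S : Fin (k + 1) → Finset α)) := by
  intro i j hij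
  induction i using Fin.cases <;> induction j using Fin.cases
  all_goals simp_all [onFun, Fin.succ_ne_zero, disjoint_comm]
  exact hS hij

lemma exists_disjoint_joins_of_isUnitFlow (hAB : Disjoint A B) :
    ∀ (k : ℕ) (f : ι → ℤ), IsUnitFlow ends A B f → netFlowInto ends f B = k →
      ∃ S : Fin k → Finset ι, Pairwise (Disjoint on S) ∧ (∀ j, ∀ e ∈ S j, f e ≠ 0) ∧
        ∀ j, Joins ends ↑(S j) A B
  | 0, _, _, _ => ⟨Fin.elim0, fun i => i.elim0, fun i => i.elim0, fun i => i.elim0⟩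
  | k + 1, f, hf, hval => by
    rcases exists_isUnitPath_or_closed (ends := ends) (supportDarts f) A B with
      ⟨a, ha, b, hb, g, hg⟩ | ⟨Z, hAZ, hZB, hZ⟩
    swap
    · have := netFlowInto_compl_nonpos hZ
      rw [hf.netFlowInto_compl hAZ hZB, hval] at this
      omega
    have hsub : ∀ e, g e ≠ 0 → (f - g) e = 0 := fun e he => by
      simp [hg.apply_eq_of_supportDarts hf.1 he]
    obtain ⟨S, hdisj, hsupp, hjoins⟩ := exists_disjoint_joins_of_isUnitFlow hAB k (f - g)
      (hf.sub_isUnitPath hg ha hb)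
      (by rw [netFlowInto_sub, hval, hg.netFlowInto_eq_one (Set.disjoint_left.1 hAB ha) hb]; simp)
    have hS : ∀ j, ∀ e ∈ S j, g e = 0 := fun j e he =>
      by_contra fun hg0 => hsupp j e he (hsub e hg0)
    refine ⟨Fin.cons (univ.filter fun e => g e ≠ 0) S, pairwise_disjoint_cons (fun j => ?_) hdisj,
      fun j => Fin.cases ?_ (fun j e he => ?_) j, fun j => Fin.cases ?_ (fun j => ?_) j⟩
    · exact disjoint_left.2 fun e he he' => (mem_filter.1 he).2 (hS j e he')
    · intro e he
      rw [← hg.apply_eq_of_supportDarts hf.1 (mem_filter.1 he).2]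
      exact (mem_filter.1 he).2
    · have := hsupp j e he
      simp only [Pi.sub_apply, hS j e he, sub_zero] at this
      exact this
    · exact ⟨a, ha, b, hb, by simpa using hg.2.2⟩
    · simpa using hjoins j

/-- Menger's theorem (edge version). -/
theorem exists_pairwise_disjoint_joins {k : ℕ}
    (hcut : ∀ C : Finset ι, C.card < k → Joins ends (↑C)ᶜ A B) :
    ∃ S : Fin k → Finset ι, Pairwise (Disjoint on S) ∧ ∀ j, Joins ends ↑(S j) A B := by
  by_cases hAB : Disjoint A B
  · obtain ⟨f, hf, hval⟩ := exists_isUnitFlow hAB hcut k le_rfl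
    obtain ⟨S, hdisj, -, hjoins⟩ := exists_disjoint_joins_of_isUnitFlow hAB k f hf hval
    exact ⟨S, hdisj, hjoins⟩
  · obtain ⟨v, hvA, hvB⟩ := Set.not_disjoint_iff.1 hAB
    exact ⟨fun _ => ∅, fun _ _ _ => disjoint_empty_left _, fun _ => ⟨v, hvA, v, hvB, .refl⟩⟩

end Menger

section Levels

variable {ι V : Type*} [Fintype ι] {ends : ι → V × V} {A B : Set V}

lemma exists_mem_reachWithin_of_joins {T : Set ι} (h : Joins ends T A B) :
    ∃ i, ∃ b ∈ B, b ∈ reachWithin ends {t | t.1 ∈ T} A i := by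
  by_contra hne
  simp only [not_exists, not_and] at hne
  refine not_joins_of_edgeBoundary (Z := ⋃ i, reachWithin ends {t | t.1 ∈ T} A i)
    (fun a ha => Set.mem_iUnion.2 ⟨0, ha⟩) (Set.disjoint_left.2 fun b hb hbB => ?_)
    (fun e he hbd => ?_) h
  · obtain ⟨i, hi⟩ := Set.mem_iUnion.1 hb
    exact hne i b hbB hi
  · obtain ⟨d, hsrc, htgt, -⟩ := exists_dart_of_mem_edgeBoundary hbd
    exact htgt (dartTgt_mem_iUnion_reachWithin (t := (e, d)) he hsrc)

/-- An edge of `T` leaving the ball of radius `i` ends in the ball of radius `i + 1`. -/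
lemma disjoint_filter_edgeBoundary_reachWithin {T : Set ι} {i j : ℕ} (hij : i < j) :
    Disjoint ((edgeBoundary ends (reachWithin ends {t | t.1 ∈ T} A i)).filter (· ∈ T))
      ((edgeBoundary ends (reachWithin ends {t | t.1 ∈ T} A j)).filter (· ∈ T)) := by
  refine disjoint_left.2 fun e hei hej => ?_
  obtain ⟨hbd, heT⟩ := mem_filter.1 hei
  obtain ⟨d, hsrc, -, -⟩ := exists_dart_of_mem_edgeBoundary hbd
  have htgt : dartTgt ends (e, d) ∈ reachWithin ends {t | t.1 ∈ T} A (i + 1) :=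
    Or.inr ⟨(e, d), heT, hsrc, rfl⟩
  have hsrc' := reachWithin_mono ends _ A hij.le hsrc
  have htgt' := reachWithin_mono ends _ A hij htgt
  have hbdj := (mem_filter.1 hej).1
  simp only [edgeBoundary, mem_filter, mem_univ, true_and] at hbdj
  rcases ends_dart (ends := ends) (e, d) with hends | hends <;> rw [hends] at hbdj <;>
    exact hbdj (iff_of_true ‹_› ‹_›)

lemma exists_short_joins_and_disjoint_cuts {T : Set ι} (h : Joins ends T A B) :
    ∃ L, (∃ W : Finset ι, ↑W ⊆ T ∧ W.card ≤ L ∧ Joins ends ↑W A B) ∧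
      ∃ C : Fin L → Finset ι, Pairwise (Disjoint on C) ∧
        ∀ j, ↑(C j) ⊆ T ∧ ¬ Joins ends (T \ ↑(C j)) A B := by
  set R := reachWithin ends {t | t.1 ∈ T} A
  have hex := exists_mem_reachWithin_of_joins h
  obtain ⟨b, hb, hbL⟩ := Nat.find_spec hex
  obtain ⟨a, ha, g, hg, -, hcard⟩ := exists_isUnitPath_of_mem_reachWithin hbL
  refine ⟨Nat.find hex, ⟨univ.filter fun e => g e ≠ 0, fun e he => ?_, hcard, a, ha, b, hb,
    by simpa using hg.2.2⟩, fun j => (edgeBoundary ends (R j)).filter (· ∈ T),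
    fun i j hij => ?_, fun j => ⟨fun e he => (mem_filter.1 he).2, ?_⟩⟩
  · obtain ⟨d, hd, -⟩ := hg.1 e (mem_filter.1 he).2
    exact hd
  · rcases lt_or_gt_of_ne (Fin.val_ne_of_ne hij) with h | h
    exacts [disjoint_filter_edgeBoundary_reachWithin h,
      (disjoint_filter_edgeBoundary_reachWithin h).symm]
  · exact not_joins_of_edgeBoundary (fun a ha => reachWithin_mono ends _ A (Nat.zero_le _) ha)
      (Set.disjoint_left.2 fun b hbR hbB => Nat.find_min hex j.isLt ⟨b, hbB, hbR⟩)
      fun e he hbd => he.2 (mem_filter.2 ⟨hbd, he.1⟩)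

end Levels

section Percolation

variable {ι V : Type*} [Fintype ι] [DecidableEq ι] {ends : ι → V × V} {A B : Set V}
  {f : (ι → Bool) → Bool}

lemma witAt_le_bsAt_of_true (hf : ∀ ω, f ω = true ↔ Joins ends {e | ω e = true} A B)
    {ω : ι → Bool} (hω : f ω = true) : witAt f ω ≤ bsAt f ω := by
  obtain ⟨L, ⟨W, hWT, hWL, hW⟩, C, hdisj, hC⟩ :=
    exists_short_joins_and_disjoint_cuts ((hf ω).1 hω)
  have hwit : IsWitness f ω W := fun y hy => by
    rw [hω, hf]
    exact hW.mono fun e he => (hy e he).trans (hWT he)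
  have hsens : ∀ j, f (flipOn ω (C j)) ≠ f ω := fun j => by
    rw [hω, ne_eq, hf, setOf_flipOn, symmDiff_of_ge (hC j).1]
    exact (hC j).2
  exact (witAt_le_card hwit).trans (hWL.trans (le_bsAt hsens hdisj))

lemma witAt_le_bsAt_of_false (hf : ∀ ω, f ω = true ↔ Joins ends {e | ω e = true} A B)
    {ω : ι → Bool} (hω : f ω = false) : witAt f ω ≤ bsAt f ω := by
  set O : Set ι := {e | ω e = true}
  have hcut : ∀ C : Finset ι, C.card < witAt f ω →
      Joins (contract ends O) (↑C)ᶜ (Quot.mk _ '' A) (Quot.mk _ '' B) := by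
    intro C hC
    obtain ⟨y, hy, hfy⟩ : ∃ y, (∀ i ∈ C, y i = ω i) ∧ f y ≠ f ω := by
      by_contra h
      simp only [not_exists, not_and, not_not] at h
      exact not_le.2 hC (witAt_le_card h)
    rw [hω, ne_eq, Bool.not_eq_false, hf] at hfy
    refine joins_contract_iff.2 (hfy.mono fun e he => ?_)
    by_cases heC : e ∈ C
    · exact Or.inl ((hy e heC).symm.trans he)
    · exact Or.inr heC
  obtain ⟨S, hdisj, hjoins⟩ := exists_pairwise_disjoint_joins hcut
  have hOS : ∀ j, Disjoint O ↑((S j).filter fun e => ω e = false) := fun j =>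
    Set.disjoint_left.2 fun e heO heS => by simp_all [O]
  refine le_bsAt (B := fun j => (S j).filter fun e => ω e = false) (fun j => ?_)
    fun i j hij => disjoint_filter_filter (hdisj hij)
  rw [hω, ne_eq, Bool.not_eq_false, hf, setOf_flipOn, (hOS j).symmDiff_eq_sup]
  refine (joins_contract_iff.1 (hjoins j)).mono fun e he => ?_
  by_cases heO : ω e = true
  · exact Or.inl heO
  · exact Or.inr (mem_filter.2 ⟨he.resolve_left heO, by simpa using heO⟩)

theorem witAt_eq_bsAt_of_joins (hf : ∀ ω, f ω = true ↔ Joins ends {e | ω e = true} A B)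
    (ω : ι → Bool) : witAt f ω = bsAt f ω := by
  refine le_antisymm ?_ (bsAt_le_witAt f ω)
  cases hω : f ω
  exacts [witAt_le_bsAt_of_false hf hω, witAt_le_bsAt_of_true hf hω]

end Percolation

/-- for a percolation function `f` (indicator of `{A ↔ B}` in a finite
multigraph with edge set `Fin n` and endpoint map `ends`), the pointwise witness
complexity equals the pointwise block sensitivity, and hence the distributional ones
agree for every `p ∈ [0,1]`. -/
theorem percolation_wit_eq_bs {V : Type*} (n : ℕ) (ends : Fin n → V × V)
    (A B : Set V) (f : (Fin n → Bool) → Bool)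
    (hf : ∀ ω : Fin n → Bool, f ω = true ↔
      ∃ a ∈ A, ∃ b ∈ B, Relation.ReflTransGen
        (fun u v => ∃ e : Fin n, ω e = true ∧ (ends e = (u, v) ∨ ends e = (v, u)))
        a b) :
    (∀ ω : Fin n → Bool, witAt f ω = bsAt f ω) ∧
      ∀ p : ℝ, 0 ≤ p → p ≤ 1 → distWit f p = distBS f p := by
  have hpt : ∀ ω, witAt f ω = bsAt f ω := witAt_eq_bsAt_of_joins (ends := ends) hf
  exact ⟨hpt, fun p _ _ => by simp only [distWit, distBS, expec, hpt]⟩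
end
end

section
/- Let m ≥ 1 and let f_m be the left-right crossing function of the (m+1) × m rectangle in the square lattice (bond percolation). Then b_{f_m}(ω) ≥ m + 1 for every edge configuration ω; consequently b(f_m, π_p) ≥ m+1 for every p. -/
open Classical

noncomputable section

/-- Index type for the edges of the rectangle `[0, m+1] × [0, m]` of the square lattice:
horizontal edges from `(i,j)` to `(i+1,j)` (`0 ≤ i ≤ m`, `0 ≤ j ≤ m`) and vertical edges
from `(i,j)` to `(i,j+1)` (`0 ≤ i ≤ m+1`, `0 ≤ j ≤ m-1`). -/
abbrev EdgeIdx (m : ℕ) := (Fin (m + 1) × Fin (m + 1)) ⊕ (Fin (m + 2) × Fin m)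

/-- Endpoints (as points of `ℕ × ℕ`) of an edge of the rectangle. -/
def edgeEnds (m : ℕ) : EdgeIdx m → (ℕ × ℕ) × (ℕ × ℕ) :=
  Sum.elim (fun e => (((e.1 : ℕ), (e.2 : ℕ)), ((e.1 : ℕ) + 1, (e.2 : ℕ))))
    (fun e => (((e.1 : ℕ), (e.2 : ℕ)), ((e.1 : ℕ), (e.2 : ℕ) + 1)))


section AuxBS

variable {ι : Type*} [Fintype ι] [DecidableEq ι]

omit [Fintype ι] in
lemma flipOn_empty (x : ι → Bool) : flipOn x (∅ : Finset ι) = x := by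
  funext i; simp [flipOn]

lemma le_bsAt_s17 (f : (ι → Bool) → Bool) (x : ι → Bool) (n : ℕ)
    (B : Fin n → Finset ι) (h1 : ∀ j, f (flipOn x (B j)) ≠ f x)
    (h2 : ∀ j k, j ≠ k → Disjoint (B j) (B k)) : n ≤ bsAt f x := by
  have hbdd : BddAbove {n | ∃ B : Fin n → Finset ι,
      (∀ j, f (flipOn x (B j)) ≠ f x) ∧ ∀ j k, j ≠ k → Disjoint (B j) (B k)} := by
    refine ⟨Fintype.card ι, fun n hn => ?_⟩
    obtain ⟨B, hB1, hB2⟩ := hn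
    have hne : ∀ j, (B j).Nonempty := by
      intro j
      rcases Finset.eq_empty_or_nonempty (B j) with h | h
      · exact absurd (by rw [h, flipOn_empty]) (hB1 j)
      · exact h
    choose g hg using hne
    have hinj : Function.Injective g := by
      intro j k hjk
      by_contra h
      exact (Finset.disjoint_left.mp (hB2 j k h) (hg j)) (hjk ▸ hg k)
    simpa using Fintype.card_le_of_injective g hinj
  exact le_csSup hbdd ⟨B, h1, h2⟩

lemma sum_wt_eq_one (p : ℝ) : ∑ x : ι → Bool, wt p x = 1 := by
  have h := Finset.prod_univ_sum (κ := fun _ : ι => Bool)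
      (t := fun _ => (Finset.univ : Finset Bool))
      (f := fun _ b => if b = true then p else 1 - p)
  rw [Fintype.piFinset_univ] at h
  unfold wt
  rw [← h]
  simp

end AuxBS

section AuxCross

variable {m : ℕ}

lemma blocked_col (ω : EdgeIdx m → Bool) (i : Fin (m + 1))
    (hcl : ∀ j : Fin (m + 1), ω (Sum.inl (i, j)) = false)
    {u v : ℕ × ℕ}
    (h : Relation.ReflTransGen
      (fun u v => ∃ e : EdgeIdx m, ω e = true ∧
        (edgeEnds m e = (u, v) ∨ edgeEnds m e = (v, u))) u v)
    (hu : u.1 ≤ (i : ℕ)) : v.1 ≤ (i : ℕ) := by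
  induction h with
  | refl => exact hu
  | tail _ hstep ih =>
    obtain ⟨e, he, hends⟩ := hstep
    cases e with
    | inl e =>
      obtain ⟨a, b⟩ := e
      have hne : (a : ℕ) ≠ (i : ℕ) := by
        intro hh
        have ha : a = i := Fin.ext hh
        rw [ha, hcl b] at he
        exact absurd he (by simp)
      have hends' : edgeEnds m (Sum.inl (a, b)) =
          (((a : ℕ), (b : ℕ)), ((a : ℕ) + 1, (b : ℕ))) := rfl
      rw [hends'] at hends
      rcases hends with hE | hE
      · injection hE with h1 h2
        rw [← h1] at ih
        rw [← h2]
        simp only at ih ⊢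
        omega
      · injection hE with h1 h2
        rw [← h2] at ih
        rw [← h1]
        simp only at ih ⊢
        omega
    | inr e =>
      obtain ⟨a, b⟩ := e
      have hends' : edgeEnds m (Sum.inr (a, b)) =
          (((a : ℕ), (b : ℕ)), ((a : ℕ), (b : ℕ) + 1)) := rfl
      rw [hends'] at hends
      rcases hends with hE | hE
      · injection hE with h1 h2
        rw [← h1] at ih
        rw [← h2]
        simpa using ih
      · injection hE with h1 h2
        rw [← h2] at ih
        rw [← h1]
        simpa using ih

lemma row_path (ω : EdgeIdx m → Bool) (i : Fin (m + 1))
    (hop : ∀ a : Fin (m + 1), ω (Sum.inl (a, i)) = true) :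
    ∀ a, a ≤ m + 1 → Relation.ReflTransGen
      (fun u v => ∃ e : EdgeIdx m, ω e = true ∧
        (edgeEnds m e = (u, v) ∨ edgeEnds m e = (v, u)))
      ((0 : ℕ), (i : ℕ)) ((a : ℕ), (i : ℕ)) := by
  intro a
  induction a with
  | zero => intro _; exact Relation.ReflTransGen.refl
  | succ a ih =>
    intro ha
    have ha' : a ≤ m := Nat.lt_succ_iff.mp ha
    refine (ih (le_trans (Nat.le_succ a) ha)).tail ?_
    refine ⟨Sum.inl (⟨a, Nat.lt_succ_of_le ha'⟩, i), hop _, Or.inl rfl⟩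

end AuxCross

/-- for the left-right crossing function `f_m` of the `(m+1) × m`
rectangle, `b_{f_m}(ω) ≥ m + 1` for every configuration `ω`, and hence
`b(f_m, π_p) ≥ m + 1` for every `p`. -/
theorem crossing_bs_lower (m : ℕ) (hm : 1 ≤ m) (f : (EdgeIdx m → Bool) → Bool)
    (hf : ∀ ω : EdgeIdx m → Bool, f ω = true ↔
      ∃ y ≤ m, ∃ y' ≤ m, Relation.ReflTransGen
        (fun u v => ∃ e : EdgeIdx m, ω e = true ∧
          (edgeEnds m e = (u, v) ∨ edgeEnds m e = (v, u)))
        ((0 : ℕ), y) ((m + 1 : ℕ), y')) :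
    (∀ ω : EdgeIdx m → Bool, m + 1 ≤ bsAt f ω) ∧
      ∀ p : ℝ, 0 ≤ p → p ≤ 1 → ((m : ℝ) + 1) ≤ distBS f p := by
  classical
  have key : ∀ ω : EdgeIdx m → Bool, m + 1 ≤ bsAt f ω := by
    intro ω
    by_cases hfo : f ω = true
    · -- column blocks
      set B : Fin (m + 1) → Finset (EdgeIdx m) := fun i =>
        Finset.univ.filter
          (fun e => ω e = true ∧ ∃ j : Fin (m + 1), e = Sum.inl (i, j)) with hB
      apply le_bsAt_s17 f ω (m + 1) B
      · intro i
        have hcl : ∀ j : Fin (m + 1), flipOn ω (B i) (Sum.inl (i, j)) = false := by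
          intro j
          by_cases hj : ω (Sum.inl (i, j)) = true
          · have : Sum.inl (i, j) ∈ B i := by
              simp [hB, hj]
            simp [flipOn, this, hj]
          · have : Sum.inl (i, j) ∉ B i := by
              simp [hB, hj]
            simp only [flipOn, if_neg this]
            simpa using hj
        rw [hfo]
        intro hcontra
        obtain ⟨y, hy, y', hy', hpath⟩ := (hf _).1 hcontra
        have hblk := blocked_col (flipOn ω (B i)) i hcl hpath (by simp)
        have hi : (i : ℕ) < m + 1 := i.isLt
        simp only at hblk
        omega
      · intro j k hjk
        rw [Finset.disjoint_left]
        intro e hej hek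
        simp only [hB, Finset.mem_filter] at hej hek
        obtain ⟨-, -, a, rfl⟩ := hej
        obtain ⟨-, -, b, hb⟩ := hek
        injection hb with hb'
        injection hb' with h1 h2
        exact hjk h1
    · -- row blocks
      have hfo' : f ω = false := by simpa using hfo
      set B : Fin (m + 1) → Finset (EdgeIdx m) := fun i =>
        Finset.univ.filter
          (fun e => ω e = false ∧ ∃ a : Fin (m + 1), e = Sum.inl (a, i)) with hB
      apply le_bsAt_s17 f ω (m + 1) B
      · intro i
        have hop : ∀ a : Fin (m + 1), flipOn ω (B i) (Sum.inl (a, i)) = true := by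
          intro a
          by_cases hj : ω (Sum.inl (a, i)) = false
          · have : Sum.inl (a, i) ∈ B i := by
              simp [hB, hj]
            simp [flipOn, this, hj]
          · have h1 : Sum.inl (a, i) ∉ B i := by
              simp [hB, hj]
            simp only [flipOn, if_neg h1]
            simpa using hj
        have : f (flipOn ω (B i)) = true := by
          refine (hf _).2 ⟨(i : ℕ), Nat.lt_succ_iff.mp i.isLt, (i : ℕ),
            Nat.lt_succ_iff.mp i.isLt, ?_⟩
          exact row_path _ i hop (m + 1) le_rfl
        rw [this, hfo']
        simp
      · intro j k hjk
        rw [Finset.disjoint_left]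
        intro e hej hek
        simp only [hB, Finset.mem_filter] at hej hek
        obtain ⟨-, -, a, rfl⟩ := hej
        obtain ⟨-, -, b, hb⟩ := hek
        injection hb with hb'
        injection hb' with h1 h2
        exact hjk h2
  refine ⟨key, ?_⟩
  intro p hp0 hp1
  have hwt : ∀ x : EdgeIdx m → Bool, 0 ≤ wt p x := by
    intro x
    refine Finset.prod_nonneg fun i _ => ?_
    by_cases h : x i <;> simp [h] <;> linarith
  have hsum : ∑ x : EdgeIdx m → Bool, wt p x = 1 := sum_wt_eq_one p
  have : distBS f p = ∑ x : EdgeIdx m → Bool, wt p x * (bsAt f x : ℝ) := rfl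
  rw [this]
  calc ((m : ℝ) + 1) = ∑ x : EdgeIdx m → Bool, wt p x * ((m : ℝ) + 1) := by
        rw [← Finset.sum_mul, hsum, one_mul]
    _ ≤ ∑ x : EdgeIdx m → Bool, wt p x * (bsAt f x : ℝ) := by
        refine Finset.sum_le_sum fun x _ => ?_
        refine mul_le_mul_of_nonneg_left ?_ (hwt x)
        have := key x
        exact_mod_cast this
end
end
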